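/- arXiv:1109.1412 — 8 statements merged into one kernel-verified Lean document; each statement's English description precedes it below -/
import Mathlib

section
/- Cauchy's determinant formula: for complex numbers x'_1,…,x'_K and t_1,…,t_K with all t_j+K-x'_i nonzero, det[(t_j+K)/(t_j+K-x'_i)]_{i,j=1}^K = (-1)^{K(K-1)/2} · ∏_{j=1}^K (t_j+K) · V(x'_1,…,x'_K)V(t_1,…,t_K) / ∏_{i,j}(t_j+K-x'_i), where V denotes the Vandermonde determinant ∏_{i<j}(z_i-z_j). -/
/-!
Subtracting `(c₀ - x₀) / (c₀ - xᵢ)` times the first row of the Cauchy matrix `[1 / (cⱼ - xᵢ)]`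
from row `i` clears the first column below the pivot `1 / (c₀ - x₀)`, and the remaining block is
the Cauchy matrix of `(xᵢ)_{i ≥ 1}, (cⱼ)_{j ≥ 1}` with row `i` scaled by `(x₀ - xᵢ) / (c₀ - xᵢ)`
and column `j` by `(cⱼ - c₀) / (cⱼ - x₀)`. By induction,
`det [1 / (cⱼ - xᵢ)] = ∏_{i<j} (xᵢ - xⱼ)(cⱼ - cᵢ) / ∏_{i,j} (cⱼ - xᵢ)`.
The theorem is the case `cⱼ = tⱼ + K` after pulling `tⱼ + K` out of column `j`; turning each
`cⱼ - cᵢ = tⱼ - tᵢ` around costs the sign `(-1)^(K choose 2)`.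
-/

open Finset Matrix

theorem Finset.prod_filter_fst_lt_snd {ι M : Type*} [Fintype ι] [LinearOrder ι]
    [LocallyFiniteOrderTop ι] [CommMonoid M] (f : ι → ι → M) :
    ∏ p ∈ univ.filter (fun p : ι × ι => p.1 < p.2), f p.1 p.2 = ∏ i, ∏ j ∈ Ioi i, f i j := by
  rw [prod_filter, Fintype.prod_prod_type]
  refine prod_congr rfl fun i _ => ?_
  rw [← filter_lt_eq_Ioi, prod_filter]

theorem Finset.prod_filter_fst_lt_snd_sub_swap {ι R : Type*} [Fintype ι] [LinearOrder ι]
    [CommRing R] (f : ι → R) :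
    ∏ p ∈ univ.filter (fun p : ι × ι => p.1 < p.2), (f p.2 - f p.1) =
      (-1) ^ (Fintype.card ι).choose 2 *
        ∏ p ∈ univ.filter (fun p : ι × ι => p.1 < p.2), (f p.1 - f p.2) := by
  rw [← Fintype.card_product_filter_lt, ← prod_neg]
  exact prod_congr rfl fun p _ => (neg_sub _ _).symm

namespace Matrix

theorem det_succ_column_zero_of_eq_zero {R : Type*} [CommRing R] {n : ℕ}
    (A : Matrix (Fin (n + 1)) (Fin (n + 1)) R) (hA : ∀ i, i ≠ 0 → A i 0 = 0) :
    A.det = A 0 0 * (A.submatrix Fin.succ Fin.succ).det := by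
  rw [det_succ_column_zero, sum_eq_single 0 (fun i _ hi => by simp [hA i hi]) (by simp)]
  simp

variable {F : Type*} [Field F]

def cauchy {ι : Type*} (x c : ι → F) : Matrix ι ι F :=
  of fun i j => (c j - x i)⁻¹

theorem det_cauchy_succ {n : ℕ} (x c : Fin (n + 1) → F) (h : ∀ i j, c j - x i ≠ 0) :
    (cauchy x c).det = (c 0 - x 0)⁻¹ *
      ((∏ i : Fin n, (x 0 - x i.succ) / (c 0 - x i.succ)) *
        ((∏ j : Fin n, (c j.succ - c 0) / (c j.succ - x 0)) *
          (cauchy (fun i : Fin n => x i.succ) (fun j => c j.succ)).det)) := by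
  let r : Fin (n + 1) → F := Fin.cons 0 fun i => -((c 0 - x 0) / (c 0 - x i.succ))
  let A : Matrix (Fin (n + 1)) (Fin (n + 1)) F :=
    of fun i j => cauchy x c i j + r i * cauchy x c 0 j
  have hA : A.det = (cauchy x c).det :=
    det_eq_of_forall_row_eq_smul_add_const r 0 (by simp [r]) fun i j => rfl
  have hcol : ∀ i, i ≠ 0 → A i 0 = 0 := by
    intro i hi
    obtain ⟨i, rfl⟩ := Fin.exists_succ_eq.mpr hi
    have := h i.succ 0
    have := h 0 0
    simp only [cauchy, of_apply, Fin.cons_succ, neg_mul, A, r]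
    field_simp
    ring
  have hsub : A.submatrix Fin.succ Fin.succ = of fun i j =>
      (x 0 - x i.succ) / (c 0 - x i.succ) *
        ((c j.succ - c 0) / (c j.succ - x 0) *
          cauchy (fun i : Fin n => x i.succ) (fun j => c j.succ) i j) := by
    ext i j
    have := h i.succ 0
    have := h 0 j.succ
    have := h i.succ j.succ
    simp only [cauchy, of_apply, submatrix_apply, Fin.cons_succ, neg_mul, A, r]
    field_simp
    ring
  have hpivot : A 0 0 = (c 0 - x 0)⁻¹ := by simp [A, r, cauchy]
  rw [← hA, det_succ_column_zero_of_eq_zero A hcol, hsub, hpivot, ← det_mul_row,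
    ← det_mul_column]
  rfl

theorem det_cauchy {n : ℕ} (x c : Fin n → F) (h : ∀ i j, c j - x i ≠ 0) :
    (cauchy x c).det = (∏ i, ∏ j ∈ Ioi i, (x i - x j)) * (∏ i, ∏ j ∈ Ioi i, (c j - c i)) /
      ∏ i, ∏ j, (c j - x i) := by
  induction n with
  | zero => simp
  | succ n ih =>
    rw [det_cauchy_succ x c h, ih _ _ fun i j => h _ _]
    have h₀ := h 0 0
    have hrow : ∏ j : Fin n, (c j.succ - x 0) ≠ 0 := prod_ne_zero_iff.mpr fun j _ => h _ _
    have hcol : ∏ i : Fin n, (c 0 - x i.succ) ≠ 0 := prod_ne_zero_iff.mpr fun i _ => h _ _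
    have hrest : ∏ i : Fin n, ∏ j : Fin n, (c j.succ - x i.succ) ≠ 0 :=
      prod_ne_zero_iff.mpr fun i _ => prod_ne_zero_iff.mpr fun j _ => h _ _
    simp only [Fin.prod_univ_succ, Fin.prod_Ioi_zero, Fin.prod_Ioi_succ, prod_mul_distrib,
      prod_div_distrib]
    field_simp

end Matrix

/-- Cauchy's determinant formula:
`det[(t_j+K)/(t_j+K-x'_i)] = (-1)^{K(K-1)/2} ∏_j (t_j+K) · V(x')V(t) / ∏_{i,j}(t_j+K-x'_i)`,
where `V(z) = ∏_{i<j}(z_i - z_j)`. -/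
theorem stmt_1 (K : ℕ) (x t : Fin K → ℂ)
    (h : ∀ i j : Fin K, t j + K - x i ≠ 0) :
    Matrix.det (Matrix.of fun i j : Fin K => (t j + K) / (t j + K - x i)) =
      (-1) ^ (K * (K - 1) / 2) * (∏ j : Fin K, (t j + K)) *
        (∏ p ∈ Finset.univ.filter (fun p : Fin K × Fin K => p.1 < p.2), (x p.1 - x p.2)) *
        (∏ p ∈ Finset.univ.filter (fun p : Fin K × Fin K => p.1 < p.2), (t p.1 - t p.2)) /
        ∏ i : Fin K, ∏ j : Fin K, (t j + K - x i) := by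
  set c : Fin K → ℂ := fun j => t j + K
  have hM : (of fun i j => (t j + K) / (t j + K - x i)) = of fun i j => c j * cauchy x c i j := by
    ext i j
    simp [c, cauchy, div_eq_mul_inv]
  have hsign := prod_filter_fst_lt_snd_sub_swap t
  rw [Fintype.card_fin, Nat.choose_two_right] at hsign
  rw [hM, det_mul_row, det_cauchy x c h, ← prod_filter_fst_lt_snd fun i j => x i - x j,
    ← prod_filter_fst_lt_snd fun i j => c j - c i]
  simp only [c, add_sub_add_right_eq_sub, hsign]
  ring
end

section
/- Krattenthaler's determinant lemma: for indeterminates X_1,…,X_n, A_2,…,A_n, B_2,…,B_n, one has det[(X_i+A_n)(X_i+A_{n-1})⋯(X_i+A_{j+1})·(X_i+B_j)(X_i+B_{j-1})⋯(X_i+B_2)]_{i,j=1}^n = ∏_{1≤i<j≤n}(X_i-X_j) · ∏_{2≤i≤j≤n}(B_i-A_j). -/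
/-!
In round `k = 0, 1, …, n-1`, subtract from every column `j ≥ k+1` (columns numbered from `0`)
its left neighbour, working from the right. Two neighbouring columns share all factors except
`X_i + B_{j+1-k}` on the right versus `X_i + A_{j+1}` on the left, so the difference is the
constant `B_{j+1-k} - A_{j+1}` times the column with its last `B`-factor removed. After `n`
rounds no `B`-factors are left and the constants collected are exactly the `B_i - A_j` with
`2 ≤ i ≤ j ≤ n`. The remaining matrix has as column `j` a monic polynomial of degree `n-1-j`
evaluated at the `X_i`, so its determinant is the Vandermonde product.
-/

open Finset Matrix Polynomial

namespace Krattenthaler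

variable {R : Type*} [CommRing R]

/-- The entry in column `j` (numbered from `0`) after `k` rounds of column operations. -/
def entry (n : ℕ) (A B : ℕ → R) (k j : ℕ) (x : R) : R :=
  (∏ m ∈ Icc (j + 2) n, (x + A m)) * ∏ m ∈ Icc 2 (j + 1 - k), (x + B m)

def colFactor (A B : ℕ → R) (k j : ℕ) : R :=
  if k < j then B (j + 1 - k) - A (j + 1) else 1

variable {n : ℕ} {A B : ℕ → R} {k j : ℕ} {x : R}

theorem entry_round_succ_of_le (h : j ≤ k) : entry n A B (k + 1) j x = entry n A B k j x := by
  rw [entry, entry, Icc_eq_empty_of_lt (show j + 1 - (k + 1) < 2 by omega),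
    Icc_eq_empty_of_lt (show j + 1 - k < 2 by omega)]

theorem entry_col_succ (hk : k ≤ j) (hn : j + 2 ≤ n) :
    entry n A B k (j + 1) x
      = colFactor A B k (j + 1) * entry n A B (k + 1) (j + 1) x + entry n A B k j x := by
  have hA : ∏ m ∈ Icc (j + 2) n, (x + A m)
      = (x + A (j + 2)) * ∏ m ∈ Icc (j + 3) n, (x + A m) := by
    rw [← mul_prod_Ioc_eq_prod_Icc hn, ← Icc_add_one_left_eq_Ioc]; rfl
  have hB : ∏ m ∈ Icc 2 (j + 2 - k), (x + B m)
      = (∏ m ∈ Icc 2 (j + 1 - k), (x + B m)) * (x + B (j + 2 - k)) := by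
    rw [show j + 2 - k = j + 1 - k + 1 by omega, prod_Icc_succ_top (by omega)]
  rw [entry, entry, entry, colFactor, if_pos (by omega), hA, hB,
    show j + 1 + 1 - (k + 1) = j + 1 - k by omega]
  ring

def stage (n : ℕ) (A B : ℕ → R) (k : ℕ) (x : Fin n → R) : Matrix (Fin n) (Fin n) R :=
  of fun i j => entry n A B k j (x i)

theorem det_stage_eq_mul_det_stage_succ (x : Fin n → R) :
    (stage n A B k x).det = (∏ j : Fin n, colFactor A B k j) * (stage n A B (k + 1) x).det := by
  rw [← det_mul_row]
  cases n with
  | zero => simp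
  | succ n =>
    refine det_eq_of_forall_col_eq_smul_add_pred (fun j : Fin n => if k ≤ j then 1 else 0)
      (fun i => ?_) (fun i j => ?_)
    · simp [stage, colFactor, entry_round_succ_of_le (Nat.zero_le k)]
    · by_cases hk : k ≤ j
      · simp [stage, hk, entry_col_succ hk (show (j : ℕ) + 2 ≤ n + 1 by omega)]
      · simp [stage, hk, colFactor, entry_round_succ_of_le (show (j : ℕ) + 1 ≤ k by omega)]

theorem det_stage_zero_eq_mul_det_stage (x : Fin n → R) (t : ℕ) :
    (stage n A B 0 x).det
      = (∏ k ∈ range t, ∏ j : Fin n, colFactor A B k j) * (stage n A B t x).det := by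
  induction t with
  | zero => simp
  | succ t ih => rw [ih, det_stage_eq_mul_det_stage_succ, prod_range_succ, mul_assoc]

theorem stage_of_le (hk : n ≤ k) (x : Fin n → R) :
    stage n A B k x = of fun i j : Fin n => ∏ m ∈ Icc (j.val + 2) n, (x i + A m) := by
  ext i j
  rw [stage, of_apply, of_apply, entry, Icc_eq_empty_of_lt (show j.val + 1 - k < 2 by omega),
    prod_empty, mul_one]

theorem prod_prod_colFactor (n : ℕ) (A B : ℕ → R) :
    ∏ k ∈ range n, ∏ j : Fin n, colFactor A B k j
      = ∏ p ∈ (Icc 2 n ×ˢ Icc 2 n).filter (fun p : ℕ × ℕ => p.1 ≤ p.2),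
          (B p.1 - A p.2) := by
  simp_rw [Fin.prod_univ_eq_prod_range (colFactor A B _)]
  rw [← prod_product']
  simp only [colFactor]
  rw [← prod_filter (fun p : ℕ × ℕ => p.1 < p.2) (fun p => B (p.2 + 1 - p.1) - A (p.2 + 1))]
  refine prod_nbij' (fun p => (p.2 + 1 - p.1, p.2 + 1)) (fun q => (q.2 - q.1, q.2 - 1))
    ?_ ?_ ?_ ?_ fun _ _ => rfl
  all_goals
    rintro ⟨a, b⟩ h
    simp only [mem_filter, mem_product, mem_range, mem_Icc, Prod.mk.injEq] at h ⊢
    omega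

theorem prod_Ioi_rev_eq_prod_filter_lt {M : Type*} [CommMonoid M] (f : Fin n → Fin n → M) :
    ∏ i : Fin n, ∏ j ∈ Ioi i, f j.rev i.rev
      = ∏ p ∈ univ.filter (fun p : Fin n × Fin n => p.1 < p.2), f p.1 p.2 := by
  rw [prod_sigma']
  refine prod_nbij' (fun p => (p.2.rev, p.1.rev)) (fun q => ⟨q.2.rev, q.1.rev⟩) ?_ ?_ ?_ ?_ ?_
  all_goals
    rintro ⟨a, b⟩ h
    simp_all [Fin.rev_lt_rev]

theorem det_eval_eq_prod_sub_of_natDegree_eq_rev (x : Fin n → R) (p : Fin n → R[X])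
    (h_deg : ∀ j, (p j).natDegree = j.rev) (h_monic : ∀ j, (p j).Monic) :
    (of fun i j => (p j).eval (x i)).det
      = ∏ q ∈ univ.filter (fun q : Fin n × Fin n => q.1 < q.2), (x q.1 - x q.2) := by
  have h_deg_rev (j : Fin n) : (p j.rev).natDegree = j := by rw [h_deg, Fin.rev_rev]
  rw [← det_submatrix_equiv_self Fin.revPerm,
    ← prod_Ioi_rev_eq_prod_filter_lt fun a b => x a - x b, ← det_vandermonde fun i => x i.rev,
    det_eval_matrixOfPolynomials_eq_det_vandermonde _ _ h_deg_rev fun j => h_monic _]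
  rfl

theorem det_prod_add_eq_prod_sub (x : Fin n → R) (A : ℕ → R) :
    (of fun i j : Fin n => ∏ m ∈ Icc (j.val + 2) n, (x i + A m)).det
      = ∏ q ∈ univ.filter (fun q : Fin n × Fin n => q.1 < q.2), (x q.1 - x q.2) := by
  nontriviality R
  have h_monic (j : Fin n) : (∏ m ∈ Icc (j.val + 2) n, (X + C (A m))).Monic :=
    monic_prod_of_monic _ _ fun m _ => monic_X_add_C (A m)
  have h_deg (j : Fin n) :
      (∏ m ∈ Icc (j.val + 2) n, (X + C (A m))).natDegree = (j.rev : ℕ) := by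
    rw [natDegree_prod_of_monic _ _ fun m _ => monic_X_add_C (A m)]
    simp only [natDegree_X_add_C, sum_const, smul_eq_mul, mul_one, Nat.card_Icc, Fin.val_rev]
    omega
  rw [← det_eval_eq_prod_sub_of_natDegree_eq_rev x _ h_deg h_monic]
  simp [eval_prod]

end Krattenthaler

/-- Krattenthaler's determinant lemma: in any commutative ring (in particular for
indeterminates over `ℤ`), with `X_1,…,X_n`, `A_2,…,A_n`, `B_2,…,B_n`,
`det[(X_i+A_n)⋯(X_i+A_{j+1})·(X_i+B_j)⋯(X_i+B_2)]_{i,j=1}^n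
  = ∏_{1≤i<j≤n}(X_i-X_j) · ∏_{2≤i≤j≤n}(B_i-A_j)`. -/
theorem stmt_2 (R : Type*) [CommRing R] (n : ℕ) (X A B : ℕ → R) :
    Matrix.det (Matrix.of fun i j : Fin n =>
        (∏ m ∈ Finset.Icc (j.val + 2) n, (X (i.val + 1) + A m)) *
          ∏ m ∈ Finset.Icc 2 (j.val + 1), (X (i.val + 1) + B m)) =
      (∏ p ∈ Finset.univ.filter (fun p : Fin n × Fin n => p.1 < p.2),
          (X (p.1.val + 1) - X (p.2.val + 1))) *
        ∏ p ∈ (Finset.Icc 2 n ×ˢ Finset.Icc 2 n).filter (fun p : ℕ × ℕ => p.1 ≤ p.2),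
          (B p.1 - A p.2) := by
  have h := Krattenthaler.det_stage_zero_eq_mul_det_stage (A := A) (B := B)
    (fun i : Fin n => X (i.val + 1)) n
  rw [Krattenthaler.stage_of_le le_rfl, Krattenthaler.det_prod_add_eq_prod_sub,
    Krattenthaler.prod_prod_colFactor, mul_comm] at h
  exact h
end

section
/- For integers n ≥ 2 and N > K ≥ 1 with n = N-K+1, one has det[(t_i+1)(t_i+2)⋯(t_i+j-1)·(t_i+N-K+j+1)⋯(t_i+N)]_{i,j=1}^K = V(t_1,…,t_K)·(-1)^{K(K-1)/2}·∏_{i=1}^K (N-K+i-1)!/(N-K)!, as polynomials in t_1,…,t_K. -/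
/-!
Column `j` of the matrix is `p_j = (X + 1)⋯(X + j) · (X + N - K + j + 2)⋯(X + N)` evaluated at the
`t i`, and every `p_j` has degree `K - 1`; so the matrix is `vandermonde t` times the coefficient
matrix of the `p_j`, and its determinant is `det (vandermonde t)` times a constant. To find the
constant, evaluate at `t i = -(i + 1)`: there `(X + 1)⋯(X + j)` vanishes for `i < j`, so the matrix
is lower triangular, and so is the matrix of the monic `(X + 1)⋯(X + j)` alone, whose determinant is
again the Vandermonde one. The constant is thus the product of the diagonal values of the second
factors, `(N - K + 1)⋯(N - i - 1) = (N - i - 1)! / (N - K)!`.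
-/

open Finset Polynomial Nat

namespace Matrix

variable {R : Type*} [CommRing R] {n : ℕ}

theorem of_eval_eq_vandermonde_mul_of_coeff (v : Fin n → R) (p : Fin n → R[X])
    (h_deg : ∀ j, (p j).natDegree < n) :
    of (fun i j => (p j).eval (v i)) = vandermonde v * of (fun (k j : Fin n) => (p j).coeff k) := by
  ext i j
  rw [of_apply, eval_eq_sum_range' (h_deg j), ← Fin.sum_univ_eq_sum_range, mul_apply]
  exact sum_congr rfl fun k _ => by rw [vandermonde_apply, of_apply, mul_comm]

theorem det_of_eval_mul_eq_det_vandermonde_mul_prod (v : Fin n → R) (q : Fin n → R[X])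
    (h_deg : ∀ j, (q j).natDegree = j) (h_monic : ∀ j, (q j).Monic)
    (h_zero : ∀ i j, i < j → (q j).eval (v i) = 0) (f : Fin n → Fin n → R) :
    det (of fun i j => (q j).eval (v i) * f i j) = det (vandermonde v) * ∏ i, f i i := by
  rw [det_eval_matrixOfPolynomials_eq_det_vandermonde v q h_deg h_monic,
    det_of_isLowerTriangular _ fun i j hij => by simp [h_zero i j hij],
    det_of_isLowerTriangular _ fun i j hij => by simp [h_zero i j hij]]
  exact prod_mul_distrib

theorem det_vandermonde_eq_prod_lt_mul_neg_one_pow (v : Fin n → R) :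
    det (vandermonde v) =
      (∏ p ∈ univ.filter (fun p : Fin n × Fin n => p.1 < p.2), (v p.1 - v p.2)) *
        (-1) ^ (n * (n - 1) / 2) := by
  have h_pairs : ∏ p ∈ univ.filter (fun p : Fin n × Fin n => p.1 < p.2), (v p.1 - v p.2) =
      ∏ i, ∏ j ∈ Ioi i, (v i - v j) := by
    rw [prod_filter, Fintype.prod_prod_type]
    exact prod_congr rfl fun i _ => by rw [← prod_filter, filter_lt_eq_Ioi]
  have h_card : ∑ i : Fin n, #(Ioi i) = n * (n - 1) / 2 := by
    simp only [Fin.card_Ioi]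
    rw [Fin.sum_univ_eq_sum_range (fun i => n - 1 - i), sum_range_reflect (fun i => i),
      sum_range_id]
  have h_flip : ∏ p ∈ univ.filter (fun p : Fin n × Fin n => p.1 < p.2), (v p.1 - v p.2) =
      (-1) ^ (n * (n - 1) / 2) * det (vandermonde v) := by
    simp_rw [h_pairs, det_vandermonde, ← h_card, ← prod_pow_eq_pow_sum, ← prod_mul_distrib,
      ← prod_const, ← prod_mul_distrib, neg_one_mul, neg_sub]
  rw [h_flip, mul_comm, ← mul_assoc, ← mul_pow, neg_one_mul, neg_neg, one_pow, one_mul]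

theorem det_of_eval_eq_det_vandermonde_mul_div {F : Type*} [Field F] (v w : Fin n → F)
    (hw : Function.Injective w) (p : Fin n → F[X]) (h_deg : ∀ j, (p j).natDegree < n) :
    det (of fun i j => (p j).eval (v i)) =
      det (vandermonde v) * (det (of fun i j => (p j).eval (w i)) / det (vandermonde w)) := by
  rw [of_eval_eq_vandermonde_mul_of_coeff v p h_deg,
    of_eval_eq_vandermonde_mul_of_coeff w p h_deg, det_mul, det_mul,
    mul_div_cancel_left₀ _ (det_vandermonde_ne_zero_iff.mpr hw)]

end Matrix

namespace Polynomial

variable {R : Type*} [CommRing R]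

theorem monic_prod_X_add_C (s : Finset ℕ) : (∏ m ∈ s, (X + C (m : R))).Monic :=
  monic_prod_of_monic _ _ fun _ _ => monic_X_add_C _

theorem natDegree_prod_X_add_C [Nontrivial R] (s : Finset ℕ) :
    (∏ m ∈ s, (X + C (m : R))).natDegree = #s := by
  rw [natDegree_prod_of_monic _ _ fun _ _ => monic_X_add_C _]
  simp only [natDegree_X_add_C, sum_const, smul_eq_mul, mul_one]

end Polynomial

open Matrix

variable {F : Type*} [Field F]

theorem prod_Icc_neg_add_eq_ascFactorial (a K i : ℕ) (hi : i < K) :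
    ∏ m ∈ Icc (a + i + 2) (K + a), (-((i : F) + 1) + m) =
      ((a + 1).ascFactorial (K - 1 - i) : F) := by
  rw [← Ico_add_one_right_eq_Icc, prod_Ico_eq_prod_range, Nat.ascFactorial_eq_prod_range,
    show K + a + 1 - (a + i + 2) = K - 1 - i by omega]
  push_cast
  exact prod_congr rfl fun k _ => by ring

variable [CharZero F]

theorem prod_Icc_factorial_div_factorial (a K : ℕ) :
    ∏ i ∈ Icc 1 K, ((a + i - 1)! / a ! : F) =
      ∏ k ∈ range K, ((a + 1).ascFactorial k : F) := by
  rw [← Ico_add_one_right_eq_Icc, prod_Ico_eq_prod_range, Nat.add_sub_cancel]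
  refine prod_congr rfl fun k _ => ?_
  rw [div_eq_iff (by exact_mod_cast a.factorial_ne_zero), show a + (1 + k) - 1 = a + k by omega,
    ← Nat.factorial_mul_ascFactorial, Nat.cast_mul, mul_comm]

theorem det_prod_Icc_mul_prod_Icc (a K : ℕ) (t : Fin K → F) :
    det (of fun i j : Fin K =>
        (∏ m ∈ Icc 1 j.val, (t i + m)) * ∏ m ∈ Icc (a + j.val + 2) (K + a), (t i + m)) =
      det (vandermonde t) * ∏ k ∈ range K, ((a + 1).ascFactorial k : F) := by
  set q : Fin K → F[X] := fun j => ∏ m ∈ Icc 1 j.val, (X + C (m : F))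
  set r : Fin K → F[X] := fun j => ∏ m ∈ Icc (a + j.val + 2) (K + a), (X + C (m : F))
  set s : Fin K → F := fun i => -((i : F) + 1)
  have h_eval : ∀ v : Fin K → F, of (fun i j : Fin K =>
      (∏ m ∈ Icc 1 j.val, (v i + m)) * ∏ m ∈ Icc (a + j.val + 2) (K + a), (v i + m)) =
      of fun i j => (q j * r j).eval (v i) := by
    intro v; ext i j; simp [q, r, eval_prod]
  have h_deg : ∀ j, (q j * r j).natDegree < K := by
    intro j
    rw [(monic_prod_X_add_C _).natDegree_mul (monic_prod_X_add_C _), natDegree_prod_X_add_C,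
      natDegree_prod_X_add_C, Nat.card_Icc, Nat.card_Icc]
    omega
  have hs : Function.Injective s := fun i j h => Fin.ext <| by simpa [s] using h
  have h_zero : ∀ i j, i < j → (q j).eval (s i) = 0 := by
    intro i j hij
    refine (eval_prod _ _ _).trans (prod_eq_zero (i := i.val + 1) ?_ (by simp [s]))
    exact mem_Icc.mpr ⟨Nat.le_add_left 1 _, hij⟩
  have h_diag : ∀ i : Fin K, (r i).eval (s i) = ((a + 1).ascFactorial (K - 1 - i) : F) := by
    intro i
    rw [← prod_Icc_neg_add_eq_ascFactorial a K i i.isLt, eval_prod]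
    simp [s]
  have h_at_s : det (of fun i j => (q j * r j).eval (s i)) =
      det (vandermonde s) * ∏ i, (r i).eval (s i) := by
    simp_rw [eval_mul]
    exact det_of_eval_mul_eq_det_vandermonde_mul_prod s q
      (fun j => (natDegree_prod_X_add_C _).trans (by simp)) (fun j => monic_prod_X_add_C _) h_zero _
  rw [h_eval t, det_of_eval_eq_det_vandermonde_mul_div t s hs _ h_deg, h_at_s,
    mul_div_cancel_left₀ _ (det_vandermonde_ne_zero_iff.mpr hs)]
  simp_rw [h_diag]
  rw [Fin.prod_univ_eq_prod_range (fun i => ((a + 1).ascFactorial (K - 1 - i) : F)),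
    prod_range_reflect (fun k => ((a + 1).ascFactorial k : F))]

theorem stmt_3_general (N K : ℕ) (hKN : K < N)
    (t : Fin K → ℂ) :
    Matrix.det (Matrix.of fun i j : Fin K =>
        (∏ m ∈ Finset.Icc 1 j.val, (t i + m)) *
          ∏ m ∈ Finset.Icc (N - K + j.val + 2) N, (t i + m)) =
      (∏ p ∈ Finset.univ.filter (fun p : Fin K × Fin K => p.1 < p.2), (t p.1 - t p.2)) *
        (-1) ^ (K * (K - 1) / 2) *
        ∏ i ∈ Finset.Icc 1 K,
          ((Nat.factorial (N - K + i - 1) : ℂ) / (Nat.factorial (N - K) : ℂ)) := by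
  obtain ⟨a, rfl⟩ := Nat.exists_eq_add_of_le hKN.le
  simp only [Nat.add_sub_cancel_left]
  rw [det_prod_Icc_mul_prod_Icc, det_vandermonde_eq_prod_lt_mul_neg_one_pow,
    prod_Icc_factorial_div_factorial]

/-- For `N > K ≥ 1` and `n = N-K+1 ≥ 2`:
`det[(t_i+1)⋯(t_i+j-1)·(t_i+N-K+j+1)⋯(t_i+N)]_{i,j=1}^K
  = V(t)·(-1)^{K(K-1)/2}·∏_{i=1}^K (N-K+i-1)!/(N-K)!`. -/
theorem stmt_3 (N K n : ℕ) (hK : 1 ≤ K) (hKN : K < N) (hn : n = N - K + 1) (hn2 : 2 ≤ n)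
    (t : Fin K → ℂ) :
    Matrix.det (Matrix.of fun i j : Fin K =>
        (∏ m ∈ Finset.Icc 1 j.val, (t i + m)) *
          ∏ m ∈ Finset.Icc (N - K + j.val + 2) N, (t i + m)) =
      (∏ p ∈ Finset.univ.filter (fun p : Fin K × Fin K => p.1 < p.2), (t p.1 - t p.2)) *
        (-1) ^ (K * (K - 1) / 2) *
        ∏ i ∈ Finset.Icc 1 K,
          ((Nat.factorial (N - K + i - 1) : ℂ) / (Nat.factorial (N - K) : ℂ)) :=
  stmt_3_general N K hKN t
end

section
/- Weyl's dimension formula for U(N): the number of triangular Gelfand–Tsetlin schemes with top row ν = (ν_1 ≥ … ≥ ν_N) ∈ ℤ^N equals ∏_{1≤i<j≤N} (ν_i - ν_j + j - i)/(j - i). -/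
/-!
Removing the top row `ν` of a scheme leaves a scheme whose top row `μ` interlaces with `ν`, so
`Dim_{n+1} ν = ∑ Dim_n μ` over the box `ν_{i+1} ≤ μ_i ≤ ν_i`. With `x_i = i - ν_i` the Weyl
product is `V(x) / V(0, 1, …)`, `V` the Vandermonde determinant, and the induction step is
`n! ∑_μ V(i - μ_i) = V(x)`. Take falling factorials `(t)_j` as column polynomials of `V`: the sum
over the box splits row by row by multilinearity, and `∑_t (t)_j` telescopes to a difference of
`(·)_{j+1}` at consecutive `x_i`, divided by `j + 1`. Such differences are exactly what subtracting
consecutive rows of the matrix `((x_i)_j)` produces, whose first column is all ones.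
-/

/-- A triangular Gelfand–Tsetlin scheme with `N` rows and top row `ν`: an array
`f j i` (`0 ≤ i ≤ j < N`, row `j` having `j+1` entries) whose top row (the row with
`N` entries) equals `ν` and whose consecutive rows interlace:
`λ^{(j+1)}_{i+1} ≤ λ^{(j)}_i ≤ λ^{(j+1)}_i`. -/
def IsGTScheme (N : ℕ) (ν : Fin N → ℤ) (f : (j : Fin N) → Fin (j.val + 1) → ℤ) : Prop :=
  (∀ (j : Fin N) (h : j.val + 1 = N) (i : Fin (j.val + 1)), f j i = ν (Fin.cast h i)) ∧
    (∀ (j : ℕ) (hj : j + 1 < N) (i : Fin (j + 1)),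
      f ⟨j + 1, hj⟩ i.succ ≤ f ⟨j, Nat.lt_of_succ_lt hj⟩ i ∧
        f ⟨j, Nat.lt_of_succ_lt hj⟩ i ≤ f ⟨j + 1, hj⟩ i.castSucc)

/-- `Dim_N ν`: the number of triangular Gelfand–Tsetlin schemes with top row `ν`. -/
noncomputable def GTDim (N : ℕ) (ν : Fin N → ℤ) : ℕ :=
  Nat.card { f : (j : Fin N) → Fin (j.val + 1) → ℤ // IsGTScheme N ν f }

open Finset Matrix Polynomial Nat

lemma Int.sum_Ico_sub' {M : Type*} [AddCommGroup M] (G : ℤ → M) {a b : ℤ} (hab : a ≤ b) :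
    ∑ t ∈ Ico a b, (G t - G (t + 1)) = G a - G b := by
  induction b, hab using Int.leInduction with
  | base => simp
  | succ b hab ih =>
    rw [← insert_Ico_right_eq_Ico_add_one hab, sum_insert (by simp), ih]
    abel

section descPochhammer

variable {R : Type*} [CommRing R]

lemma descPochhammer_eval_add_one_sub_eval (j : ℕ) (x : R) :
    (descPochhammer R (j + 1)).eval (x + 1) - (descPochhammer R (j + 1)).eval x =
      (j + 1) * (descPochhammer R j).eval x := by
  have h : (descPochhammer R (j + 1)).eval (x + 1) = (x + 1) * (descPochhammer R j).eval x := by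
    simp [descPochhammer_succ_left]
  rw [h, descPochhammer_succ_eval]
  ring

lemma mul_sum_Icc_descPochhammer_eval_sub (j : ℕ) (c : R) {a b : ℤ} (hab : a ≤ b + 1) :
    (j + 1) * ∑ t ∈ Icc a b, (descPochhammer R j).eval (c - t) =
      (descPochhammer R (j + 1)).eval (c + 1 - a) - (descPochhammer R (j + 1)).eval (c - b) := by
  have hb : c - b = c + 1 - ((b + 1 : ℤ) : R) := by push_cast; ring
  rw [mul_sum, ← Ico_add_one_right_eq_Icc, hb,
    ← Int.sum_Ico_sub' (fun t : ℤ => (descPochhammer R (j + 1)).eval (c + 1 - t)) hab]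
  refine sum_congr rfl fun t _ => ?_
  rw [← descPochhammer_eval_add_one_sub_eval]
  push_cast
  ring_nf

end descPochhammer

namespace Matrix

variable {R : Type*} [CommRing R]

lemma det_of_sum_rows {ι n : Type*} [Fintype n] [DecidableEq n]
    (s : n → Finset ι) (r : n → ι → n → R) :
    (of fun i j => ∑ a ∈ s i, r i a j).det =
      ∑ x ∈ Fintype.piFinset s, (of fun i j => r i (x i) j).det := by
  rw [show (of fun i j => ∑ a ∈ s i, r i a j) = of fun i => ∑ a ∈ s i, r i a by
    ext; simp [Finset.sum_apply]]
  exact (detRowAlternating (R := R)).map_sum_finset r s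

lemma det_eq_det_sub_of_col_zero_eq_one {n : ℕ} (A : Matrix (Fin (n + 1)) (Fin (n + 1)) R)
    (hA : ∀ i, A i 0 = 1) :
    A.det = (of fun i j : Fin n => A i.succ j.succ - A i.castSucc j.succ).det := by
  let B : Matrix (Fin (n + 1)) (Fin (n + 1)) R := Fin.cases (A 0) fun i => A i.succ - A i.castSucc
  have hAB : A.det = B.det :=
    det_eq_of_forall_row_eq_smul_add_pred (fun _ => 1) (fun _ => rfl) fun i j => by simp [B]
  rw [hAB, det_succ_column_zero, Fin.sum_univ_succ]
  simp [B, hA]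
  rfl

lemma det_vandermonde_eq_det_descPochhammer [IsDomain R] {n : ℕ} (v : Fin n → R) :
    (vandermonde v).det = (of fun i j : Fin n => (descPochhammer R j).eval (v i)).det :=
  det_eval_matrixOfPolynomials_eq_det_vandermonde v _ (fun j => descPochhammer_natDegree R j)
    fun j => monic_descPochhammer R j

lemma prod_filter_lt_sub_eq_det_vandermonde {n : ℕ} (v : Fin n → R) :
    ∏ p ∈ univ.filter (fun p : Fin n × Fin n => p.1 < p.2), (v p.2 - v p.1) =
      (vandermonde v).det := by
  rw [det_vandermonde, prod_filter, Fintype.prod_prod_type]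
  refine prod_congr rfl fun i _ => ?_
  rw [← prod_filter]
  exact prod_congr filter_lt_eq_Ioi fun _ _ => rfl

end Matrix

noncomputable def interlacingBox {n : ℕ} (ν : Fin (n + 1) → ℤ) : Finset (Fin n → ℤ) :=
  Fintype.piFinset fun i => Icc (ν i.succ) (ν i.castSucc)

lemma mem_interlacingBox {n : ℕ} {ν : Fin (n + 1) → ℤ} {μ : Fin n → ℤ} :
    μ ∈ interlacingBox ν ↔ ∀ i, ν i.succ ≤ μ i ∧ μ i ≤ ν i.castSucc := by
  simp only [interlacingBox, Fintype.mem_piFinset, mem_Icc]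

lemma antitone_of_mem_interlacingBox {n : ℕ} {ν : Fin (n + 1) → ℤ} {μ : Fin n → ℤ}
    (hμ : μ ∈ interlacingBox ν) : Antitone μ := by
  rcases n with _ | n
  · exact Subsingleton.antitone μ
  exact Fin.antitone_iff_succ_le.2 fun i =>
    ((mem_interlacingBox.1 hμ i.succ).2.trans_eq rfl).trans (mem_interlacingBox.1 hμ i.castSucc).1

section TriangularArray

variable {n : ℕ}

def truncateTop (f : (j : Fin (n + 1)) → Fin (j.val + 1) → ℤ) :
    (j : Fin n) → Fin (j.val + 1) → ℤ :=
  fun j i => f ⟨j, by omega⟩ i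

def snocTop (g : (j : Fin n) → Fin (j.val + 1) → ℤ) (ν : Fin (n + 1) → ℤ) :
    (j : Fin (n + 1)) → Fin (j.val + 1) → ℤ :=
  fun j i => if h : j.val < n then g ⟨j, h⟩ i else ν ⟨i, by omega⟩

def topRow (g : (j : Fin n) → Fin (j.val + 1) → ℤ) : Fin n → ℤ :=
  fun i => g ⟨n - 1, by have := i.isLt; omega⟩ (⟨i, by have := i.isLt; omega⟩ : Fin (n - 1 + 1))

lemma triangularArray_apply_congr {N : ℕ} (f : (j : Fin N) → Fin (j.val + 1) → ℤ) {a b : ℕ}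
    {ha : a < N} {hb : b < N} (h : a = b) {i : Fin (a + 1)} {i' : Fin (b + 1)}
    (hi : i.val = i'.val) : f ⟨a, ha⟩ i = f ⟨b, hb⟩ i' := by
  subst h; cases Fin.ext hi; rfl

lemma truncateTop_snocTop (g : (j : Fin n) → Fin (j.val + 1) → ℤ) (ν : Fin (n + 1) → ℤ) :
    truncateTop (snocTop g ν) = g :=
  funext fun j => funext fun _ => dif_pos j.isLt

end TriangularArray

namespace IsGTScheme

lemma apply_top {N : ℕ} {ν : Fin N → ℤ} {f : (j : Fin N) → Fin (j.val + 1) → ℤ}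
    (hf : IsGTScheme N ν f) {j : Fin N} (hj : j.val + 1 = N) {i : Fin (j.val + 1)} {k : Fin N}
    (hk : i.val = k.val) : f j i = ν k :=
  (hf.1 j hj i).trans (congrArg ν (Fin.ext hk))

variable {n : ℕ} {ν : Fin (n + 1) → ℤ}

lemma topRow_eq {μ : Fin n → ℤ} {g : (j : Fin n) → Fin (j.val + 1) → ℤ}
    (hg : IsGTScheme n μ g) : topRow g = μ :=
  funext fun i => hg.apply_top (show n - 1 + 1 = n by have := i.isLt; omega) rfl

lemma truncate {f : (j : Fin (n + 1)) → Fin (j.val + 1) → ℤ} (hf : IsGTScheme (n + 1) ν f) :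
    IsGTScheme n (topRow (truncateTop f)) (truncateTop f) := by
  refine ⟨fun j hj i => ?_, fun j hj i => hf.2 j (by omega) i⟩
  exact triangularArray_apply_congr f (b := n - 1) (by omega) rfl

lemma topRow_truncateTop_mem {f : (j : Fin (n + 1)) → Fin (j.val + 1) → ℤ}
    (hf : IsGTScheme (n + 1) ν f) : topRow (truncateTop f) ∈ interlacingBox ν := by
  refine mem_interlacingBox.2 fun i => ?_
  have hn := i.isLt
  obtain ⟨hsucc, hcastSucc⟩ := hf.2 (n - 1) (by omega) ⟨i, by omega⟩
  have htop : n - 1 + 1 + 1 = n + 1 := by omega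
  rw [hf.apply_top (j := ⟨n - 1 + 1, by omega⟩) htop (k := i.succ) (by simp)] at hsucc
  rw [hf.apply_top (j := ⟨n - 1 + 1, by omega⟩) htop (k := i.castSucc) (by simp)] at hcastSucc
  exact ⟨hsucc, hcastSucc⟩

lemma snocTop_truncateTop {f : (j : Fin (n + 1)) → Fin (j.val + 1) → ℤ}
    (hf : IsGTScheme (n + 1) ν f) : snocTop (truncateTop f) ν = f := by
  funext j i
  by_cases h : j.val < n
  · exact dif_pos h
  · exact (dif_neg h).trans (hf.1 j (by omega) i).symm

lemma snoc {μ : Fin n → ℤ} {g : (j : Fin n) → Fin (j.val + 1) → ℤ}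
    (hμ : μ ∈ interlacingBox ν) (hg : IsGTScheme n μ g) : IsGTScheme (n + 1) ν (snocTop g ν) := by
  refine ⟨fun j hj i => dif_neg (by omega), fun j hj i => ?_⟩
  by_cases hjn : j + 1 < n
  · simp only [snocTop, dif_pos hjn, dif_pos (show j < n by omega)]
    exact hg.2 j hjn i
  · simp only [snocTop, dif_neg hjn, dif_pos (show j < n by omega)]
    rw [hg.1 ⟨j, by omega⟩ (show j + 1 = n by omega) i]
    exact mem_interlacingBox.1 hμ (Fin.cast (by omega) i)

end IsGTScheme

abbrev GTSchemes (N : ℕ) (ν : Fin N → ℤ) :=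
  { f : (j : Fin N) → Fin (j.val + 1) → ℤ // IsGTScheme N ν f }

def gtSchemesSuccEquiv {n : ℕ} (ν : Fin (n + 1) → ℤ) :
    GTSchemes (n + 1) ν ≃ Σ μ : interlacingBox ν, GTSchemes n μ where
  toFun f := ⟨⟨topRow (truncateTop f.1), IsGTScheme.topRow_truncateTop_mem f.2⟩,
    ⟨_, IsGTScheme.truncate f.2⟩⟩
  invFun p := ⟨snocTop p.2.1 ν, IsGTScheme.snoc p.1.2 p.2.2⟩
  left_inv f := Subtype.ext (IsGTScheme.snocTop_truncateTop f.2)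
  right_inv p := Sigma.subtype_ext
    (Subtype.ext ((congrArg topRow (truncateTop_snocTop _ _)).trans (IsGTScheme.topRow_eq p.2.2)))
    (truncateTop_snocTop _ _)

instance GTSchemes.instFinite (N : ℕ) (ν : Fin N → ℤ) : Finite (GTSchemes N ν) := by
  induction N with
  | zero => infer_instance
  | succ n ih => exact Finite.of_equiv _ (gtSchemesSuccEquiv ν).symm

lemma gtDim_zero (ν : Fin 0 → ℤ) : GTDim 0 ν = 1 :=
  Nat.card_eq_one_iff_unique.2
    ⟨⟨fun f g => Subtype.ext (funext fun j => j.elim0)⟩,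
      ⟨⟨fun j => j.elim0, fun j => j.elim0, fun _ hj => by omega⟩⟩⟩

lemma gtDim_succ {n : ℕ} (ν : Fin (n + 1) → ℤ) :
    GTDim (n + 1) ν = ∑ μ ∈ interlacingBox ν, GTDim n μ := by
  rw [GTDim, Nat.card_congr (gtSchemesSuccEquiv ν), Nat.card_sigma]
  exact sum_coe_sort (interlacingBox ν) fun μ => GTDim n μ

/-- The paper's shifted coordinates `ν_i - i`, negated so that the Vandermonde factors
`x_j - x_i` (`i < j`) are the numerators `ν_i - ν_j + j - i` of the Weyl product. -/
def shiftedSignature {n : ℕ} (ν : Fin n → ℤ) : Fin n → ℚ := fun i => i - ν i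

lemma shiftedSignature_zero {n : ℕ} :
    shiftedSignature (0 : Fin n → ℤ) = fun i : Fin n => (i : ℚ) := by
  ext; simp [shiftedSignature]

lemma factorial_mul_sum_det_vandermonde_interlacingBox {n : ℕ} (ν : Fin (n + 1) → ℤ)
    (hν : Antitone ν) :
    (n ! : ℚ) * ∑ μ ∈ interlacingBox ν, (vandermonde (shiftedSignature μ)).det =
      (vandermonde (shiftedSignature ν)).det := by
  set Δ : Matrix (Fin n) (Fin n) ℚ := of fun i j =>
    (descPochhammer ℚ (j + 1)).eval (shiftedSignature ν i.succ) -
      (descPochhammer ℚ (j + 1)).eval (shiftedSignature ν i.castSucc)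
  have hrows : ∀ i j : Fin n,
      ∑ t ∈ Icc (ν i.succ) (ν i.castSucc), (descPochhammer ℚ j).eval ((i : ℚ) - t) =
        ((j : ℚ) + 1)⁻¹ * Δ i j := by
    intro i j
    rw [eq_inv_mul_iff_mul_eq₀ (by positivity), mul_sum_Icc_descPochhammer_eval_sub _ _
      ((Fin.antitone_iff_succ_le.1 hν i).trans (by omega))]
    simp [Δ, shiftedSignature]
  have hfac : ∏ j : Fin n, ((j : ℚ) + 1)⁻¹ = (n ! : ℚ)⁻¹ := by
    rw [prod_inv_distrib, Fin.prod_univ_eq_prod_range (fun j => (j : ℚ) + 1),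
      ← prod_range_add_one_eq_factorial]
    push_cast
    rfl
  calc (n ! : ℚ) * ∑ μ ∈ interlacingBox ν, (vandermonde (shiftedSignature μ)).det
      = n ! * (of fun i j : Fin n => ∑ t ∈ Icc (ν i.succ) (ν i.castSucc),
          (descPochhammer ℚ j).eval ((i : ℚ) - t)).det := by
        rw [det_of_sum_rows]
        simp only [det_vandermonde_eq_det_descPochhammer, interlacingBox, shiftedSignature]
    _ = Δ.det := by
        simp only [hrows, det_mul_row, hfac, ← mul_assoc]
        rw [mul_inv_cancel₀ (by positivity), one_mul]
    _ = (vandermonde (shiftedSignature ν)).det := by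
        rw [det_vandermonde_eq_det_descPochhammer, det_eq_det_sub_of_col_zero_eq_one _ (by simp)]
        rfl

lemma det_vandermonde_natCast_succ (n : ℕ) :
    (vandermonde fun i : Fin (n + 1) => (i : ℚ)).det =
      n ! * (vandermonde fun i : Fin n => (i : ℚ)).det := by
  have h := factorial_mul_sum_det_vandermonde_interlacingBox (n := n) 0 antitone_const
  simpa [interlacingBox, ← Pi.zero_def, shiftedSignature_zero] using h.symm

theorem gtDim_eq_det_vandermonde_div {N : ℕ} (ν : Fin N → ℤ) (hν : Antitone ν) :
    (GTDim N ν : ℚ) =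
      (vandermonde (shiftedSignature ν)).det / (vandermonde fun i : Fin N => (i : ℚ)).det := by
  induction N with
  | zero => simp [gtDim_zero]
  | succ n ih =>
    rw [gtDim_succ, Nat.cast_sum,
      sum_congr rfl fun μ hμ => ih μ (antitone_of_mem_interlacingBox hμ), ← sum_div,
      ← factorial_mul_sum_det_vandermonde_interlacingBox ν hν, det_vandermonde_natCast_succ,
      mul_div_mul_left _ _ (by positivity)]

/-- Weyl's dimension formula: for a signature `ν = (ν_1 ≥ … ≥ ν_N)`, the number of
triangular Gelfand–Tsetlin schemes with top row `ν` equals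
`∏_{1≤i<j≤N} (ν_i - ν_j + j - i)/(j - i)`. -/
theorem stmt_12 (N : ℕ) (ν : Fin N → ℤ) (hν : ∀ i j : Fin N, i ≤ j → ν j ≤ ν i) :
    (GTDim N ν : ℚ) =
      ∏ p ∈ Finset.univ.filter (fun p : Fin N × Fin N => p.1 < p.2),
        (((ν p.1 : ℚ) - (ν p.2 : ℚ) + (p.2.val : ℚ) - (p.1.val : ℚ)) /
          ((p.2.val : ℚ) - (p.1.val : ℚ))) := by
  rw [gtDim_eq_det_vandermonde_div ν hν, prod_div_distrib,
    ← prod_filter_lt_sub_eq_det_vandermonde, ← prod_filter_lt_sub_eq_det_vandermonde]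
  congr 1
  refine prod_congr rfl fun p _ => ?_
  simp only [shiftedSignature]
  ring
end

section
/- Fix a signature κ of length K ≥ 1 and let N = K+1. If ν ranges over signatures of length N with κ ≺ ν and ν → ∞ in the discrete space of signatures (i.e., ν_1 → +∞ or ν_N → -∞), then the ratio Λ^N_{N-1}(ν,κ) = (N-1)!·∏_{1≤i<j≤N-1}(κ_i-κ_j+j-i) / ∏_{1≤i<j≤N}(ν_i-ν_j+j-i) tends to 0. -/
/-!
Every factor `ν_i - ν_j + j - i` of the denominator is at least `1` for a signature `ν`, so the
denominator dominates its factor `ν_1 - ν_N + N - 1`. Hence `Λ ≥ ε` bounds the spread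
`ν_1 - ν_N` by `A / ε`, where `A` is the (fixed) numerator. Interlacing pins `ν_1 ≥ κ_1` and
`ν_N ≤ κ_K`, so all entries of `ν` lie in a fixed bounded interval.
-/

open Finset

def shiftedVandermonde {n : ℕ} (ν : Fin n → ℤ) : ℚ :=
  ∏ p ∈ univ.filter (fun p : Fin n × Fin n => p.1 < p.2),
    ((ν p.1 : ℚ) - (ν p.2 : ℚ) + (p.2.val : ℚ) - (p.1.val : ℚ))

section shiftedVandermonde

variable {n : ℕ} {ν : Fin n → ℤ}

lemma one_le_shiftedVandermonde_factor (hν : Antitone ν) {i j : Fin n} (hij : i < j) :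
    1 ≤ (ν i : ℚ) - (ν j : ℚ) + (j.val : ℚ) - (i.val : ℚ) := by
  have hν' : (ν j : ℚ) ≤ ν i := by exact_mod_cast hν hij.le
  have hij' : (i.val : ℚ) + 1 ≤ j.val := by exact_mod_cast hij
  linarith

lemma shiftedVandermonde_factor_le (hν : Antitone ν) {i j : Fin n} (hij : i < j) :
    (ν i : ℚ) - (ν j : ℚ) + (j.val : ℚ) - (i.val : ℚ) ≤ shiftedVandermonde ν := by
  have hsub : {(i, j)} ⊆ univ.filter (fun p : Fin n × Fin n => p.1 < p.2) := by simpa using hij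
  have h := prod_le_prod_of_subset_of_one_le hsub
    (f := fun p : Fin n × Fin n => (ν p.1 : ℚ) - (ν p.2 : ℚ) + (p.2.val : ℚ) - (p.1.val : ℚ))
    (by simpa using zero_le_one.trans (one_le_shiftedVandermonde_factor hν hij))
    (fun p hp _ => one_le_shiftedVandermonde_factor hν (mem_filter.mp hp).2)
  rwa [prod_singleton] at h

lemma one_le_shiftedVandermonde (hν : Antitone ν) : 1 ≤ shiftedVandermonde ν :=
  one_le_prod fun _ hp => one_le_shiftedVandermonde_factor hν (mem_filter.mp hp).2

lemma sub_last_le_shiftedVandermonde {ν : Fin (n + 1) → ℤ} (hν : Antitone ν) :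
    (ν 0 : ℚ) - ν (Fin.last n) ≤ shiftedVandermonde ν := by
  rcases Nat.eq_zero_or_pos n with rfl | hn
  · simpa using zero_le_one.trans (one_le_shiftedVandermonde hν)
  · have h := shiftedVandermonde_factor_le hν
      (show (0 : Fin (n + 1)) < Fin.last n from Fin.lt_def.mpr (by simpa using hn))
    simp only [Fin.val_last, Fin.val_zero, Nat.cast_zero, sub_zero] at h
    linarith [n.cast_nonneg (α := ℚ)]

end shiftedVandermonde

lemma finite_antitone_of_bounds (n : ℕ) (a b : ℤ) :
    {ν : Fin (n + 1) → ℤ | Antitone ν ∧ a ≤ ν (Fin.last n) ∧ ν 0 ≤ b}.Finite := by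
  refine (Set.Finite.pi fun _ : Fin (n + 1) => Set.finite_Icc a b).subset ?_
  rintro ν ⟨hν, ha, hb⟩ i -
  exact ⟨ha.trans (hν (Fin.le_last i)), (hν (Fin.zero_le i)).trans hb⟩

theorem stmt_14_general (K : ℕ) (hK : 1 ≤ K) (κ : Fin K → ℤ)
    (ε : ℚ) (hε : 0 < ε) :
    {ν : Fin (K + 1) → ℤ |
        (∀ i j : Fin (K + 1), i ≤ j → ν j ≤ ν i) ∧
        (∀ i : Fin K, ν i.succ ≤ κ i ∧ κ i ≤ ν i.castSucc) ∧
        ε ≤ (Nat.factorial K : ℚ) *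
            (∏ p ∈ Finset.univ.filter (fun p : Fin K × Fin K => p.1 < p.2),
              ((κ p.1 : ℚ) - (κ p.2 : ℚ) + (p.2.val : ℚ) - (p.1.val : ℚ))) /
            ∏ p ∈ Finset.univ.filter (fun p : Fin (K + 1) × Fin (K + 1) => p.1 < p.2),
              ((ν p.1 : ℚ) - (ν p.2 : ℚ) + (p.2.val : ℚ) - (p.1.val : ℚ))}.Finite := by
  obtain ⟨k, rfl⟩ : ∃ k, K = k + 1 := ⟨K - 1, by omega⟩
  set A : ℚ := (k + 1).factorial * shiftedVandermonde κ
  set C : ℤ := ⌈A / ε⌉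
  refine (finite_antitone_of_bounds (k + 1) (κ 0 - C) (κ (Fin.last k) + C)).subset ?_
  rintro ν ⟨hν, hinterlace, hΛ⟩
  change ε ≤ A / shiftedVandermonde ν at hΛ
  have hspread : (ν 0 : ℚ) - ν (Fin.last (k + 1)) ≤ C :=
    calc (ν 0 : ℚ) - ν (Fin.last (k + 1)) ≤ shiftedVandermonde ν :=
          sub_last_le_shiftedVandermonde hν
      _ ≤ A / ε := (le_div_comm₀ hε (zero_lt_one.trans_le (one_le_shiftedVandermonde hν))).mp hΛ
      _ ≤ C := Int.le_ceil _
  have hspread' : ν 0 - ν (Fin.last (k + 1)) ≤ C := by exact_mod_cast hspread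
  have hfirst : κ 0 ≤ ν 0 := (hinterlace 0).2
  have hlast : ν (Fin.last (k + 1)) ≤ κ (Fin.last k) := (hinterlace (Fin.last k)).1
  exact ⟨hν, by omega, by omega⟩

/-- Fix a signature `κ` of length `K ≥ 1` and let `N = K+1`. As `ν` ranges over
signatures of length `N` with `κ ≺ ν`, the quantity
`Λ^N_{N-1}(ν,κ) = (N-1)!·∏_{1≤i<j≤N-1}(κ_i-κ_j+j-i) / ∏_{1≤i<j≤N}(ν_i-ν_j+j-i)`
tends to `0` as `ν → ∞`: for every `ε > 0` only finitely many such `ν` satisfy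
`Λ^N_{N-1}(ν,κ) ≥ ε`. -/
theorem stmt_14 (K : ℕ) (hK : 1 ≤ K) (κ : Fin K → ℤ)
    (hκ : ∀ i j : Fin K, i ≤ j → κ j ≤ κ i) (ε : ℚ) (hε : 0 < ε) :
    {ν : Fin (K + 1) → ℤ |
        (∀ i j : Fin (K + 1), i ≤ j → ν j ≤ ν i) ∧
        (∀ i : Fin K, ν i.succ ≤ κ i ∧ κ i ≤ ν i.castSucc) ∧
        ε ≤ (Nat.factorial K : ℚ) *
            (∏ p ∈ Finset.univ.filter (fun p : Fin K × Fin K => p.1 < p.2),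
              ((κ p.1 : ℚ) - (κ p.2 : ℚ) + (p.2.val : ℚ) - (p.1.val : ℚ))) /
            ∏ p ∈ Finset.univ.filter (fun p : Fin (K + 1) × Fin (K + 1) => p.1 < p.2),
              ((ν p.1 : ℚ) - (ν p.2 : ℚ) + (p.2.val : ℚ) - (p.1.val : ℚ))}.Finite :=
  stmt_14_general K hK κ ε hε
end

section
/- For integers a ≤ b, set L = {a,…,b} with n = b-a+1 ≥ 2 points. The rational functions f_{L,k}(t) = ∏_{x∈L}(t-x) / ∏_{x∈L}(t-x-k), for k ∈ ℤ, form a basis of the vector space V_L of rational functions in t that are regular on ℂ ∪ {∞} except for possible simple poles at integer points outside L. -/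
/-- The fraction `f_{L,k}(t) = ∏_{x∈L}(t-x) / ∏_{x∈L}(t-x-k)` for `L = {a,…,b}`. -/
noncomputable def fL (a b k : ℤ) : RatFunc ℂ :=
  (∏ x ∈ Finset.Icc a b, ((RatFunc.X : RatFunc ℂ) - RatFunc.C (x : ℂ))) /
    ∏ x ∈ Finset.Icc a b, ((RatFunc.X : RatFunc ℂ) - RatFunc.C ((x + k : ℤ) : ℂ))

/-- The space `V_L` of rational functions regular on `ℂ ∪ {∞}` except for possible simple
poles at integer points outside `L`: the span of `1` and the fractions `1/(t-m)`,
`m ∈ ℤ ∖ L`. -/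
noncomputable def VL (a b : ℤ) : Submodule ℂ (RatFunc ℂ) :=
  Submodule.span ℂ
    ({1} ∪ {g : RatFunc ℂ | ∃ m : ℤ, m ∉ Finset.Icc a b ∧
      g = ((RatFunc.X : RatFunc ℂ) - RatFunc.C ((m : ℤ) : ℂ))⁻¹})

open Polynomial Finset Lagrange

/-!
Index the spanning set of `V_L` by `ℤ`: `1` sits at `0`, and `1/(t - m)` sits at `j ≠ 0` when `m`
is the `|j|`-th integer outside `L`, to the right of `b` if `j > 0` and to the left of `a` if
`j < 0`. This family is linearly independent by uniqueness of partial fractions.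

After cancelling common factors, `f_{L,k}` is a quotient of two coprime monic products of linear
factors of equal degree; the roots of the denominator lie among the first `|k|` integers outside
`L` on the side of `k` and include the `|k|`-th one. Lagrange interpolation of numerator minus
denominator at these roots gives `f_{L,k} = 1 + ∑ c_m/(t - m)` with nonzero residues `c_m`, so the
`f_{L,k}` arise from the basis by a transformation that is triangular with respect to `|k|` and
has nonzero diagonal.
-/

section Triangular

variable {ι K M : Type*} [Field K] [AddCommGroup M] [Module K M] {B f : ι → M} {r : ι → ℕ}

theorem span_range_eq_of_triangular
    (htri : ∀ k, ∃ c : K, c ≠ 0 ∧ f k - c • B k ∈ Submodule.span K (B '' {j | r j < r k})) :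
    Submodule.span K (Set.range f) = Submodule.span K (Set.range B) := by
  refine le_antisymm (Submodule.span_le.2 ?_) (Submodule.span_le.2 ?_)
  · rintro _ ⟨k, rfl⟩
    obtain ⟨c, -, hc⟩ := htri k
    rw [← sub_add_cancel (f k) (c • B k)]
    exact add_mem (Submodule.span_mono (Set.image_subset_range _ _) hc)
      (Submodule.smul_mem _ _ (Submodule.subset_span ⟨k, rfl⟩))
  · rintro _ ⟨k, rfl⟩
    induction hn : r k using Nat.strong_induction_on generalizing k with
    | _ n ih =>
      obtain ⟨c, hc0, hc⟩ := htri k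
      have hlower : Submodule.span K (B '' {j | r j < r k}) ≤ Submodule.span K (Set.range f) :=
        Submodule.span_le.2 <| Set.image_subset_iff.2 fun j hj => ih _ (hn ▸ hj) j rfl
      have hBk : B k = c⁻¹ • (f k - (f k - c • B k)) := by
        rw [sub_sub_cancel, smul_smul, inv_mul_cancel₀ hc0, one_smul]
      rw [hBk]
      exact Submodule.smul_mem _ _ (sub_mem (Submodule.subset_span ⟨k, rfl⟩) (hlower hc))

theorem LinearIndependent.of_triangular (hB : LinearIndependent K B)
    (htri : ∀ k, ∃ c : K, c ≠ 0 ∧ f k - c • B k ∈ Submodule.span K (B '' {j | r j < r k})) :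
    LinearIndependent K f := by
  classical
  choose c hc0 A hAsupp hA using fun k => (htri k).imp fun c hc =>
    hc.imp_right (Finsupp.mem_span_image_iff_linearCombination K).1
  set T : ι → ι →₀ K := fun k => Finsupp.single k (c k) + A k
  have hf : ∀ k, f k = Finsupp.linearCombination K B (T k) := fun k => by
    rw [map_add, hA, Finsupp.linearCombination_single, add_sub_cancel]
  rw [linearIndependent_iff]
  intro l hl
  by_contra hl0
  obtain ⟨k, hk, hmax⟩ := l.support.exists_max_image r (Finsupp.support_nonempty_iff.2 hl0)
  have hTl : Finsupp.linearCombination K T l = 0 := by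
    apply hB
    rw [Finsupp.linearCombination_linearCombination, map_zero, ← hl]
    simp_rw [← hf]
  have hcoeff : Finsupp.linearCombination K T l k = l k * c k := by
    rw [Finsupp.linearCombination_apply, Finsupp.sum_apply, Finsupp.sum,
      Finset.sum_eq_single_of_mem k hk]
    · simp [T, Finsupp.notMem_support_iff.1 fun h => lt_irrefl (r k) (hAsupp k h)]
    · intro i hi hik
      have hAik : A i k = 0 := Finsupp.notMem_support_iff.1 fun h =>
        (hmax i hi).not_gt (hAsupp i h)
      simp [T, hik, hAik]
  rw [hTl, Finsupp.zero_apply] at hcoeff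
  exact Finsupp.mem_support_iff.1 hk (mul_eq_zero.1 hcoeff.symm |>.resolve_right (hc0 k))

end Triangular

section RatFunc

variable {F ι : Type*} [Field F]

theorem RatFunc.algebraMap_nodal (s : Finset ι) (v : ι → F) :
    algebraMap F[X] (RatFunc F) (nodal s v) = ∏ i ∈ s, (RatFunc.X - RatFunc.C (v i)) := by
  simp [nodal, map_prod, RatFunc.algebraMap_X, RatFunc.algebraMap_C]

theorem RatFunc.X_sub_C_ne_zero (z : F) : (RatFunc.X - RatFunc.C z : RatFunc F) ≠ 0 := by
  simpa [RatFunc.algebraMap_X, RatFunc.algebraMap_C] using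
    RatFunc.algebraMap_ne_zero (Polynomial.X_sub_C_ne_zero z)

theorem linearIndependent_ite_one_inv_X_sub_C [DecidableEq ι] (i₀ : ι) {v : ι → F}
    (hv : Set.InjOn v {i | i ≠ i₀}) :
    LinearIndependent F fun i =>
      if i = i₀ then (1 : RatFunc F) else (RatFunc.X - RatFunc.C (v i))⁻¹ := by
  rw [linearIndependent_iff']
  intro s g hg
  set t := s.erase i₀
  have hcop : Set.Pairwise (t : Set ι) fun i j => IsCoprime (X - C (v i)) (X - C (v j)) :=
    fun i hi j hj hij => isCoprime_X_sub_C_of_isUnit_sub (sub_ne_zero.2 fun h =>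
      hij (hv (mem_erase.1 hi).1 (mem_erase.1 hj).1 h)).isUnit
  have hsplit : (∑ i ∈ s,
      g i • if i = i₀ then (1 : RatFunc F) else (RatFunc.X - RatFunc.C (v i))⁻¹) =
      RatFunc.C (if i₀ ∈ s then g i₀ else 0) + ∑ i ∈ t, g i • (RatFunc.X - RatFunc.C (v i))⁻¹ := by
    have hrest : ∑ i ∈ t,
        (g i • if i = i₀ then (1 : RatFunc F) else (RatFunc.X - RatFunc.C (v i))⁻¹) =
        ∑ i ∈ t, g i • (RatFunc.X - RatFunc.C (v i))⁻¹ :=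
      sum_congr rfl fun i hi => by rw [if_neg (ne_of_mem_erase hi)]
    by_cases hi₀ : i₀ ∈ s
    · rw [← add_sum_erase _ _ hi₀, hrest, if_pos rfl, if_pos hi₀, RatFunc.smul_eq_C_mul, mul_one]
    · rw [if_neg hi₀, map_zero, zero_add, ← hrest]
      simp only [t, erase_eq_of_notMem hi₀]
  have hrel : algebraMap F[X] (RatFunc F) (C (if i₀ ∈ s then g i₀ else 0)) +
      ∑ i ∈ t, algebraMap F[X] (RatFunc F) (C (g i)) / algebraMap F[X] (RatFunc F) (X - C (v i)) =
      algebraMap F[X] (RatFunc F) 0 +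
        ∑ i ∈ t, algebraMap F[X] (RatFunc F) 0 / algebraMap F[X] (RatFunc F) (X - C (v i)) := by
    rw [hsplit] at hg
    simpa only [map_zero, zero_div, zero_mul, sum_const_zero, zero_add, RatFunc.algebraMap_C,
      map_sub, RatFunc.algebraMap_X, div_eq_mul_inv, RatFunc.smul_eq_C_mul] using hg
  obtain ⟨hq, hr⟩ := quo_add_sum_rem_div_unique (RatFunc F) (fun i _ => monic_X_sub_C (v i)) hcop
    (fun i _ => (degree_C_le).trans_lt (by simp)) (fun i _ => by simp) hrel
  intro i hi
  by_cases h : i = i₀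
  · subst h
    simpa [hi] using hq
  · simpa using hr i (mem_erase.2 ⟨h, hi⟩)

theorem nodal_div_nodal_eq_one_add_sum [DecidableEq ι] {s t : Finset ι} {v : ι → F}
    (hvt : Set.InjOn v t) (hst : #s = #t) :
    algebraMap F[X] (RatFunc F) (nodal s v) / algebraMap F[X] (RatFunc F) (nodal t v) =
      1 + ∑ i ∈ t, ((nodal s v).eval (v i) * nodalWeight t v i) •
        (RatFunc.X - RatFunc.C (v i))⁻¹ := by
  have hdeg : (nodal s v - nodal t v).degree < #t := by
    have := degree_sub_lt_left (p := nodal s v) (q := nodal t v)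
      (by rw [degree_nodal, degree_nodal, hst]) nodal_ne_zero
      (nodal_monic.leadingCoeff.trans nodal_monic.leadingCoeff.symm)
    rwa [degree_nodal, hst] at this
  have hinterp : nodal s v - nodal t v =
      ∑ i ∈ t, C ((nodal s v).eval (v i)) * Lagrange.basis t v i := by
    rw [eq_interpolate hvt hdeg, interpolate_apply]
    refine sum_congr rfl fun i hi => ?_
    rw [eval_sub, eval_nodal_at_node hi, sub_zero]
  have hbasis : ∀ i ∈ t, algebraMap F[X] (RatFunc F) (Lagrange.basis t v i) /
      algebraMap F[X] (RatFunc F) (nodal t v) =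
        nodalWeight t v i • (RatFunc.X - RatFunc.C (v i))⁻¹ := by
    intro i hi
    rw [basis_eq_prod_sub_inv_mul_nodal_div hi, ← nodal_erase_eq_nodal_div hi,
      nodal_eq_mul_nodal_erase hi, map_mul, map_mul, RatFunc.algebraMap_C, map_sub,
      RatFunc.algebraMap_X, RatFunc.algebraMap_C, RatFunc.smul_eq_C_mul,
      mul_div_mul_right _ _ (RatFunc.algebraMap_ne_zero nodal_ne_zero), div_eq_mul_inv]
  calc algebraMap F[X] (RatFunc F) (nodal s v) / algebraMap F[X] (RatFunc F) (nodal t v)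
      = 1 + algebraMap F[X] (RatFunc F) (nodal s v - nodal t v) /
          algebraMap F[X] (RatFunc F) (nodal t v) := by
        rw [map_sub, sub_div, div_self (RatFunc.algebraMap_ne_zero nodal_ne_zero), add_sub_cancel]
    _ = _ := by
        rw [hinterp, map_sum, sum_div]
        refine congrArg _ (sum_congr rfl fun i hi => ?_)
        rw [map_mul, mul_div_assoc, hbasis i hi, RatFunc.algebraMap_C, ← RatFunc.smul_eq_C_mul,
          smul_smul]

end RatFunc

section OuterPoints

variable {a b k m : ℤ}

def outerPoint (a b j : ℤ) : ℤ := if 0 < j then b + j else a + j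

noncomputable def basisVL (a b j : ℤ) : RatFunc ℂ :=
  if j = 0 then 1 else (RatFunc.X - RatFunc.C ((outerPoint a b j : ℤ) : ℂ))⁻¹

theorem outerPoint_injOn (hab : a ≤ b) : Set.InjOn (outerPoint a b) {j | j ≠ 0} := by
  intro i hi j hj h
  simp only [outerPoint] at h
  split_ifs at h <;> omega

theorem linearIndependent_basisVL (hab : a ≤ b) : LinearIndependent ℂ (basisVL a b) :=
  linearIndependent_ite_one_inv_X_sub_C 0 (Int.cast_injective.comp_injOn (outerPoint_injOn hab))

theorem range_basisVL (a b : ℤ) : Set.range (basisVL a b) =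
    {1} ∪ {g : RatFunc ℂ | ∃ m : ℤ, m ∉ Icc a b ∧
      g = ((RatFunc.X : RatFunc ℂ) - RatFunc.C ((m : ℤ) : ℂ))⁻¹} := by
  ext g
  constructor
  · rintro ⟨j, rfl⟩
    by_cases hj : j = 0
    · simp [basisVL, hj]
    · refine Or.inr ⟨outerPoint a b j, ?_, if_neg hj⟩
      simp only [outerPoint, mem_Icc]
      split_ifs <;> omega
  · rintro (rfl | ⟨m, hm, rfl⟩)
    · exact ⟨0, if_pos rfl⟩
    · rw [mem_Icc] at hm
      have hj : ∃ j ≠ 0, outerPoint a b j = m := by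
        by_cases hmb : b < m
        · exact ⟨m - b, by omega, by simp [outerPoint, hmb]⟩
        · exact ⟨m - a, by omega, by rw [outerPoint, if_neg (by omega)]; ring⟩
      obtain ⟨j, hj0, rfl⟩ := hj
      exact ⟨j, if_neg hj0⟩

theorem fL_eq_nodal_div_nodal (a b k : ℤ) :
    fL a b k =
      algebraMap ℂ[X] (RatFunc ℂ) (nodal (Icc a b \ Icc (a + k) (b + k)) ((↑) : ℤ → ℂ)) /
        algebraMap ℂ[X] (RatFunc ℂ) (nodal (Icc (a + k) (b + k) \ Icc a b) ((↑) : ℤ → ℂ)) := by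
  have hden : ∏ x ∈ Icc a b, (RatFunc.X - RatFunc.C (((x + k : ℤ)) : ℂ)) =
      ∏ x ∈ Icc (a + k) (b + k), (RatFunc.X - RatFunc.C ((x : ℤ) : ℂ)) := by
    rw [← map_add_right_Icc, prod_map]
    rfl
  rw [fL, hden, RatFunc.algebraMap_nodal, RatFunc.algebraMap_nodal,
    ← prod_inter_mul_prod_sdiff (Icc a b) (Icc (a + k) (b + k)),
    ← prod_inter_mul_prod_sdiff (Icc (a + k) (b + k)) (Icc a b), inter_comm,
    mul_div_mul_left _ _ (prod_ne_zero_iff.2 fun x _ => RatFunc.X_sub_C_ne_zero _)]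

theorem outerPoint_mem_sdiff (hab : a ≤ b) (hk : k ≠ 0) :
    outerPoint a b k ∈ Icc (a + k) (b + k) \ Icc a b := by
  simp only [outerPoint, mem_sdiff, mem_Icc]
  split_ifs <;> omega

theorem exists_outerPoint_eq_of_mem_sdiff (hm : m ∈ Icc (a + k) (b + k) \ Icc a b) :
    ∃ j ≠ 0, outerPoint a b j = m ∧ (j = k ∨ j.natAbs < k.natAbs) := by
  simp only [mem_sdiff, mem_Icc] at hm
  by_cases hmb : b < m
  · exact ⟨m - b, by omega, by simp [outerPoint, hmb], by omega⟩
  · exact ⟨m - a, by omega, by rw [outerPoint, if_neg (by omega)]; ring, by omega⟩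

theorem fL_sub_smul_basisVL_mem_span (hab : a ≤ b) (k : ℤ) :
    ∃ c : ℂ, c ≠ 0 ∧ fL a b k - c • basisVL a b k ∈
      Submodule.span ℂ (basisVL a b '' {j | j.natAbs < k.natAbs}) := by
  rcases eq_or_ne k 0 with rfl | hk
  · refine ⟨1, one_ne_zero, ?_⟩
    rw [fL_eq_nodal_div_nodal, add_zero, add_zero, sdiff_self, bot_eq_empty, nodal_empty, map_one,
      div_one, basisVL, if_pos rfl, one_smul, sub_self]
    exact zero_mem _
  set u := Icc a b \ Icc (a + k) (b + k)
  set v := Icc (a + k) (b + k) \ Icc a b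
  have hcard : #u = #v := card_sdiff_comm (by simp only [Int.card_Icc]; ring_nf)
  have hk₀ := outerPoint_mem_sdiff hab hk
  refine ⟨(nodal u ((↑) : ℤ → ℂ)).eval ((outerPoint a b k : ℤ) : ℂ) *
    nodalWeight v (↑) (outerPoint a b k),
    mul_ne_zero ?_ (nodalWeight_ne_zero Int.cast_injective.injOn hk₀), ?_⟩
  · exact eval_nodal_not_at_node fun x hx h => disjoint_left.1 disjoint_sdiff_sdiff hx
      (Int.cast_injective h ▸ hk₀)
  rw [fL_eq_nodal_div_nodal, nodal_div_nodal_eq_one_add_sum Int.cast_injective.injOn hcard,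
    ← add_sum_erase _ _ hk₀, basisVL, if_neg hk, add_left_comm, add_sub_cancel_left]
  refine add_mem (Submodule.subset_span ⟨0, by simpa using hk, if_pos rfl⟩)
    (sum_mem fun m hm => Submodule.smul_mem _ _ (Submodule.subset_span ?_))
  obtain ⟨hmk, hm⟩ := mem_erase.1 hm
  obtain ⟨j, hj, rfl, hjk⟩ := exists_outerPoint_eq_of_mem_sdiff hm
  exact ⟨j, hjk.resolve_left (by rintro rfl; exact hmk rfl), if_neg hj⟩

end OuterPoints

theorem stmt_15_general (a b : ℤ) (hab : a ≤ b) :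
    LinearIndependent ℂ (fun k : ℤ => fL a b k) ∧
      Submodule.span ℂ (Set.range (fun k : ℤ => fL a b k)) = VL a b :=
  ⟨(linearIndependent_basisVL hab).of_triangular (fL_sub_smul_basisVL_mem_span hab),
    (span_range_eq_of_triangular (fL_sub_smul_basisVL_mem_span hab)).trans
      (by rw [range_basisVL, VL])⟩

/-- For `L = {a,…,b}` with `n = b-a+1 ≥ 2` points, the functions `f_{L,k}`, `k ∈ ℤ`,
form a basis of `V_L`: they are linearly independent and span `V_L`. -/
theorem stmt_15 (a b : ℤ) (hab : a ≤ b) (hn : 2 ≤ b - a + 1) :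
    LinearIndependent ℂ (fun k : ℤ => fL a b k) ∧
      Submodule.span ℂ (Set.range (fun k : ℤ => fL a b k)) = VL a b :=
  stmt_15_general a b hab
end

section
/- For integers n ≥ 2 and m ≥ 1, the partial fraction identity 1/(t-n-m) = -1/(m+n-1) + (n-1)/((m)_n) · ∑_{k=1}^m (m-k+1)_{n-2} · (t-1)(t-2)⋯(t-n) / ((t-1-k)(t-2-k)⋯(t-n-k)) holds as an identity of rational functions in t. -/
/-!
Write `D_r(y) = y(y-1)⋯(y-r+1)` for the falling factorial, so that the `k`-th summand is
`(m-k+1)_{n-2} · D_n(t-1) / D_n(t-k-1)`. Because `(c+1)_{n-1} - (c)_{n-1} = (n-1)(c+1)_{n-2}`, this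
summand equals `D_n(t-1) / ((n-1)(t-n-m))` times `F k - F (k+1)`, where
`F k = (m-k+1)_{n-1} / D_{n-1}(t-k-1)`. The sum telescopes to
`(t-1)(m)_{n-1} / ((n-1)(t-n-m))`, since `F (m+1)` carries the factor `(0)_{n-1} = 0`, and the
identity reduces to `(t-1) - (t-n-m) = m+n-1`.
-/

open Finset Polynomial

lemma ascPochhammer_eval_eq_prod_range {R : Type*} [CommSemiring R] (n : ℕ) (r : R) :
    (ascPochhammer R n).eval r = ∏ j ∈ range n, (r + j) := by
  induction n with
  | zero => simp
  | succ n ih => rw [ascPochhammer_succ_eval, ih, prod_range_succ]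

lemma ascPochhammer_eval_natCast_ne_zero {R : Type*} [Semiring R] [CharZero R] (n : ℕ) {m : ℕ}
    (hm : 0 < m) : (ascPochhammer R n).eval (m : R) ≠ 0 := by
  rw [← ascPochhammer_eval_cast, Nat.cast_ne_zero]
  exact (ascPochhammer_pos n m hm).ne'

lemma ascPochhammer_succ_eval_add_one {R : Type*} [CommSemiring R] (n : ℕ) (a : R) :
    (ascPochhammer R (n + 1)).eval (a + 1) =
      (ascPochhammer R (n + 1)).eval a + (n + 1) * (ascPochhammer R n).eval (a + 1) := by
  simpa using congrArg (eval a) (ascPochhammer_succ_comp_X_add_one (S := R) n)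

lemma descPochhammer_succ_eval_eq_mul_sub_one {R : Type*} [CommRing R] (n : ℕ) (y : R) :
    (descPochhammer R (n + 1)).eval y = y * (descPochhammer R n).eval (y - 1) := by
  simpa using congrArg (eval y) (descPochhammer_succ_left (R := R) n)

lemma prod_Icc_sub_add_eq_descPochhammer_eval {R : Type*} [CommRing R] (x a : R) (n : ℕ) :
    ∏ j ∈ Icc 1 n, (x - (j + a)) = (descPochhammer R n).eval (x - a - 1) := by
  rw [descPochhammer_eval_eq_prod_range, ← Ico_add_one_right_eq_Icc, prod_Ico_eq_prod_range,
    Nat.add_sub_cancel]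
  refine prod_congr rfl fun j _ => ?_
  push_cast
  ring

lemma descPochhammer_eval_sub_natCast_ne_zero {K : Type*} [Field K] {x : K}
    (hx : ∀ c : ℕ, x ≠ c) (n k : ℕ) : (descPochhammer K n).eval (x - k) ≠ 0 := by
  rw [descPochhammer_eval_eq_prod_range]
  refine prod_ne_zero_iff.2 fun j _ => ?_
  rw [sub_sub, ← Nat.cast_add, sub_ne_zero]
  exact hx _

lemma ascPochhammer_eval_add_one_mul_sub_sub {R : Type*} [CommRing R] (c y : R) (p : ℕ) :
    (ascPochhammer R (p + 1)).eval (c + 1) * (y - (p + 1)) -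
        (ascPochhammer R (p + 1)).eval c * y =
      (p + 1) * (ascPochhammer R p).eval (c + 1) * (y - (c + p + 1)) := by
  linear_combination
    y * ascPochhammer_succ_eval_add_one p c - (p + 1) * ascPochhammer_succ_eval p (c + 1)

section Field

variable {K : Type*} [Field K]

lemma ascPochhammer_eval_div_descPochhammer_eval_eq_sub (c y : K) (p : ℕ)
    (hD : (descPochhammer K (p + 2)).eval y ≠ 0) (hp : (p : K) + 1 ≠ 0)
    (hc : y - (c + p + 1) ≠ 0) :
    (ascPochhammer K p).eval (c + 1) / (descPochhammer K (p + 2)).eval y =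
      ((ascPochhammer K (p + 1)).eval (c + 1) / (descPochhammer K (p + 1)).eval y -
        (ascPochhammer K (p + 1)).eval c / (descPochhammer K (p + 1)).eval (y - 1)) /
        ((p + 1) * (y - (c + p + 1))) := by
  have hright : (descPochhammer K (p + 2)).eval y =
      (descPochhammer K (p + 1)).eval y * (y - (p + 1)) := by
    rw [descPochhammer_succ_eval]
    push_cast
    ring
  have hleft := descPochhammer_succ_eval_eq_mul_sub_one (p + 1) y
  have hD₁ : (descPochhammer K (p + 1)).eval y ≠ 0 := left_ne_zero_of_mul (hright ▸ hD)
  have hD₂ : (descPochhammer K (p + 1)).eval (y - 1) ≠ 0 := right_ne_zero_of_mul (hleft ▸ hD)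
  rw [div_sub_div _ _ hD₁ hD₂, div_div,
    div_eq_div_iff hD (mul_ne_zero (mul_ne_zero hD₁ hD₂) (mul_ne_zero hp hc))]
  linear_combination
    (-(descPochhammer K (p + 1)).eval y * (descPochhammer K (p + 1)).eval (y - 1)) *
      ascPochhammer_eval_add_one_mul_sub_sub c y p -
    (ascPochhammer K (p + 1)).eval (c + 1) * (descPochhammer K (p + 1)).eval (y - 1) * hright +
    (ascPochhammer K (p + 1)).eval c * (descPochhammer K (p + 1)).eval y * hleft

lemma sum_ascPochhammer_eval_mul_div_descPochhammer_eval [CharZero K] {x : K}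
    (hx : ∀ c : ℕ, x ≠ c) (p : ℕ) {m : ℕ} (hm : 1 ≤ m) :
    ∑ k ∈ Icc 1 m, (ascPochhammer K p).eval ((m : K) - k + 1) *
        ((descPochhammer K (p + 2)).eval (x - 1) / (descPochhammer K (p + 2)).eval (x - k - 1)) =
      (x - 1) * (ascPochhammer K (p + 1)).eval (m : K) /
        ((p + 1) * (x - (p + 2 + m))) := by
  set F : ℕ → K := fun k =>
    (ascPochhammer K (p + 1)).eval ((m : K) - k + 1) / (descPochhammer K (p + 1)).eval (x - k - 1)
  have hp : (p : K) + 1 ≠ 0 := Nat.cast_add_one_ne_zero p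
  have hxnm : x - (p + 2 + m) ≠ 0 := by
    rw [sub_ne_zero]
    exact_mod_cast hx (p + 2 + m)
  have hterm : ∀ k ∈ Icc 1 m, (ascPochhammer K p).eval ((m : K) - k + 1) *
      ((descPochhammer K (p + 2)).eval (x - 1) / (descPochhammer K (p + 2)).eval (x - k - 1)) =
      (descPochhammer K (p + 2)).eval (x - 1) / ((p + 1) * (x - (p + 2 + m))) *
        (F k - F (k + 1)) := by
    intro k _
    have hc : x - k - 1 - ((m : K) - k + p + 1) = x - (p + 2 + m) := by ring
    have hD : (descPochhammer K (p + 2)).eval (x - k - 1) ≠ 0 := by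
      simpa [sub_sub] using descPochhammer_eval_sub_natCast_ne_zero hx (p + 2) (k + 1)
    have hF : F (k + 1) = (ascPochhammer K (p + 1)).eval ((m : K) - k) /
        (descPochhammer K (p + 1)).eval (x - k - 1 - 1) := by
      simp only [F]
      push_cast
      ring_nf
    rw [mul_div_left_comm,
      ascPochhammer_eval_div_descPochhammer_eval_eq_sub _ _ p hD hp (hc ▸ hxnm), hF, hc,
      mul_div_assoc', div_mul_eq_mul_div]
  have htel : ∑ k ∈ Icc 1 m, (F k - F (k + 1)) = F 1 - F (m + 1) := by
    simpa using congrArg Neg.neg (sum_Icc_sub hm F)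
  have hF_top : F (m + 1) = 0 := by simp [F]
  have hF_one : F 1 = (ascPochhammer K (p + 1)).eval (m : K) /
      (descPochhammer K (p + 1)).eval (x - 1 - 1) := by simp [F]
  have hD : (descPochhammer K (p + 1)).eval (x - 1 - 1) ≠ 0 := by
    simpa [sub_sub, one_add_one_eq_two] using descPochhammer_eval_sub_natCast_ne_zero hx (p + 1) 2
  rw [sum_congr rfl hterm, ← mul_sum, htel, hF_top, hF_one, sub_zero,
    descPochhammer_succ_eval_eq_mul_sub_one]
  field_simp

theorem inv_sub_natCast_add_natCast_eq_sum [CharZero K] {x : K}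
    (hx : ∀ c : ℕ, x ≠ c) {n m : ℕ} (hn : 2 ≤ n) (hm : 1 ≤ m) :
    (x - ((n : K) + m))⁻¹ =
      -((m : K) + n - 1)⁻¹ +
        ((n : K) - 1) / (∏ j ∈ range n, ((m : K) + j)) *
          ∑ k ∈ Icc 1 m, (∏ j ∈ range (n - 2), ((m : K) - k + 1 + j)) *
            ((∏ j ∈ Icc 1 n, (x - j)) / ∏ j ∈ Icc 1 n, (x - (j + k))) := by
  obtain ⟨p, rfl⟩ : ∃ p, n = p + 2 := ⟨n - 2, by omega⟩
  have hP : ∏ j ∈ Icc 1 (p + 2), (x - j) = (descPochhammer K (p + 2)).eval (x - 1) := by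
    simpa using prod_Icc_sub_add_eq_descPochhammer_eval x 0 (p + 2)
  simp_rw [Nat.add_sub_cancel, hP, prod_Icc_sub_add_eq_descPochhammer_eval,
    ← ascPochhammer_eval_eq_prod_range]
  rw [sum_ascPochhammer_eval_mul_div_descPochhammer_eval hx p hm, ascPochhammer_succ_eval]
  have hA : (ascPochhammer K (p + 1)).eval (m : K) ≠ 0 := ascPochhammer_eval_natCast_ne_zero _ hm
  have hp : (p : K) + 1 ≠ 0 := Nat.cast_add_one_ne_zero p
  have hmp : (m : K) + (p + 1) ≠ 0 := by exact_mod_cast Nat.succ_ne_zero (m + p)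
  have hxnm : x - (p + 2 + m) ≠ 0 := by
    rw [sub_ne_zero]
    exact_mod_cast hx (p + 2 + m)
  push_cast
  rw [show (m : K) + (p + 2) - 1 = m + (p + 1) by ring]
  field_simp
  ring

end Field

lemma RatFunc.X_ne_natCast {K : Type*} [Field K] (c : ℕ) : (RatFunc.X : RatFunc K) ≠ c := by
  intro h
  have := congrArg RatFunc.intDegree (h.trans (map_natCast RatFunc.C c).symm)
  rw [RatFunc.intDegree_X, RatFunc.intDegree_C] at this
  exact one_ne_zero this

/-- For integers `n ≥ 2`, `m ≥ 1`, the partial fraction identity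
`1/(t-n-m) = -1/(m+n-1) + (n-1)/((m)_n) · ∑_{k=1}^m (m-k+1)_{n-2} ·
  (t-1)⋯(t-n)/((t-1-k)⋯(t-n-k))` as rational functions in `t` over `ℚ`,
where `(x)_r` denotes the rising factorial. -/
theorem stmt_16 (n m : ℕ) (hn : 2 ≤ n) (hm : 1 ≤ m) :
    ((RatFunc.X : RatFunc ℚ) - RatFunc.C ((n : ℚ) + m))⁻¹ =
      -RatFunc.C (((m : ℚ) + n - 1)⁻¹) +
        RatFunc.C (((n : ℚ) - 1) / ∏ j ∈ Finset.range n, ((m : ℚ) + j)) *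
          ∑ k ∈ Finset.Icc 1 m,
            RatFunc.C (∏ j ∈ Finset.range (n - 2), ((m : ℚ) - k + 1 + j)) *
              ((∏ j ∈ Finset.Icc 1 n, ((RatFunc.X : RatFunc ℚ) - RatFunc.C (j : ℚ))) /
                ∏ j ∈ Finset.Icc 1 n, ((RatFunc.X : RatFunc ℚ) - RatFunc.C ((j : ℚ) + k))) := by
  simpa only [map_add, map_sub, map_one, map_natCast, map_inv₀, map_div₀, map_prod] using
    inv_sub_natCast_add_natCast_eq_sum (RatFunc.X_ne_natCast (K := ℚ)) hn hm
end

section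
/- Let (M^{(n)}) be a sequence of probability measures on ℤ, each log-concave (M(k)M(l) ≤ M((k+l)/2)² for all k,l of the same parity) and with no internal zeros (support an interval). If M^{(n)} converges weakly (pointwise on ℤ) to a nonzero measure M^{(∞)}, then M^{(∞)} is a probability measure and the second moments of M^{(n)} converge to the second moment of M^{(∞)}. -/
/-!
Log-concavity without internal zeros makes `log M` concave on the support of `M`, whence
`M(a)^q M(a+p+q)^p ≤ M(a+p)^(p+q)`. If `M(k₀) ≥ δ` and the total mass is at most one, then
`M(k₀ + m) ≤ δ/2` as soon as `mδ ≥ 2` (otherwise `m + 1` consecutive values would all be at least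
`δ/2`), and the same inequality turns this into the geometric decay `M(k) ≤ 2 w^|k - k₀|` with
`w^m = 1/2`. As `w` depends only on `δ` and `M⁽ⁿ⁾(k₀) → M⁽∞⁾(k₀) > 0`, the bound is uniform in
large `n`, and dominated convergence gives both the mass and the second moment of `M⁽∞⁾`.
-/

open Filter Finset Topology

structure IsLogConcaveSeq (f : ℤ → ℝ) : Prop where
  nonneg : ∀ k, 0 ≤ f k
  log_concave : ∀ k l : ℤ, k % 2 = l % 2 → f k * f l ≤ f ((k + l) / 2) ^ 2
  no_internal_zeros : ∀ k l m : ℤ, k ≤ l → l ≤ m → f k ≠ 0 → f m ≠ 0 → f l ≠ 0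

theorem chord_le_of_midpoint_concave {g : ℕ → ℝ} {N : ℕ}
    (hg : ∀ i, i + 2 ≤ N → g i + g (i + 2) ≤ 2 * g (i + 1)) {p q : ℕ} (hpq : p + q ≤ N) :
    q * g 0 + p * g (p + q) ≤ (p + q) * g p := by
  rcases Nat.eq_zero_or_pos p with rfl | hp
  · simp
  set d : ℕ → ℝ := fun i => g (i + 1) - g i
  have hd_anti : ∀ i j, i ≤ j → j + 1 ≤ N → d j ≤ d i := by
    intro i j hij hj
    induction j, hij using Nat.le_induction with
    | base => exact le_rfl
    | succ j _ ih =>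
      have := hg j (by omega)
      exact le_trans (by simp only [d]; linarith) (ih (by omega))
  have hleft : p * d (p - 1) ≤ g p - g 0 := by
    have htel : ∑ i ∈ range p, d i = g p - g 0 := Finset.sum_range_sub g p
    rw [← htel]
    simpa only [card_range, nsmul_eq_mul] using card_nsmul_le_sum (range p) d (d (p - 1))
      fun i hi => hd_anti i (p - 1) (by simp at hi; omega) (by omega)
  have hright : g (p + q) - g p ≤ q * d (p - 1) := by
    have htel : ∑ i ∈ range q, d (p + i) = g (p + q) - g p :=
      Finset.sum_range_sub (fun i => g (p + i)) q
    rw [← htel]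
    simpa only [card_range, nsmul_eq_mul] using
      sum_le_card_nsmul (range q) (fun i => d (p + i)) (d (p - 1))
        fun i hi => hd_anti (p - 1) (p + i) (by omega) (by simp at hi; omega)
  nlinarith [mul_le_mul_of_nonneg_left hleft (Nat.cast_nonneg q),
    mul_le_mul_of_nonneg_left hright (Nat.cast_nonneg p)]

theorem summable_natAbs_sub {h : ℕ → ℝ} (hh : Summable h) (k₀ : ℤ) :
    Summable fun k : ℤ => h (k - k₀).natAbs := by
  have : Summable fun j : ℤ => h j.natAbs :=
    .of_nat_of_neg (by simpa only [Int.natAbs_natCast])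
      (by simpa only [Int.natAbs_neg, Int.natAbs_natCast])
  exact this.comp_injective (sub_left_injective (b := k₀))

theorem summable_sq_add_one_mul_pow_natAbs_sub {w : ℝ} (hw₀ : 0 ≤ w) (hw₁ : w < 1) (k₀ : ℤ) :
    Summable fun k : ℤ => ((k : ℝ) ^ 2 + 1) * w ^ (k - k₀).natAbs := by
  have hw : ‖w‖ < 1 := by rwa [Real.norm_of_nonneg hw₀]
  have hsq := summable_natAbs_sub (summable_pow_mul_geometric_of_norm_lt_one 2 hw) k₀
  have hgeom := summable_natAbs_sub (summable_geometric_of_lt_one hw₀ hw₁) k₀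
  refine ((hsq.mul_left 2).add (hgeom.mul_left (2 * (k₀ : ℝ) ^ 2 + 1))).of_nonneg_of_le
    (fun k => by positivity) fun k => ?_
  have hk : ((k - k₀).natAbs : ℝ) ^ 2 = ((k : ℝ) - k₀) ^ 2 := by
    rw [Nat.cast_natAbs, Int.cast_abs, sq_abs, Int.cast_sub]
  simp only [hk]
  nlinarith [sq_nonneg ((k : ℝ) - 2 * k₀), pow_nonneg hw₀ (k - k₀).natAbs]

theorem summable_and_tendsto_tsum_of_dominated {α β E : Type*} [NormedAddCommGroup E]
    [CompleteSpace E] {l : Filter α} [l.NeBot] {F : α → β → E} {G : β → E} {b : β → ℝ}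
    (hb : Summable b) (hlim : ∀ k, Tendsto (F · k) l (𝓝 (G k)))
    (hbound : ∀ᶠ n in l, ∀ k, ‖F n k‖ ≤ b k) :
    Summable G ∧ Tendsto (fun n => ∑' k, F n k) l (𝓝 (∑' k, G k)) :=
  ⟨hb.of_norm_bounded fun k => le_of_tendsto (hlim k).norm (hbound.mono fun _ h => h k),
    tendsto_tsum_of_dominated_convergence hb hlim hbound⟩

namespace IsLogConcaveSeq

section

variable {f : ℤ → ℝ} (hf : IsLogConcaveSeq f)
include hf

theorem mul_le_sq_succ (k : ℤ) : f k * f (k + 2) ≤ f (k + 1) ^ 2 := by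
  simpa [show (k + (k + 2)) / 2 = k + 1 by omega] using hf.log_concave k (k + 2) (by omega)

theorem pos_of_mem_Icc {a b c : ℤ} (ha : f a ≠ 0) (hc : f c ≠ 0) (hb : b ∈ Set.Icc a c) :
    0 < f b :=
  (hf.nonneg b).lt_of_ne' (hf.no_internal_zeros a b c hb.1 hb.2 ha hc)

theorem pow_mul_pow_le_pow (a : ℤ) (p q : ℕ) :
    f a ^ q * f (a + p + q) ^ p ≤ f (a + p) ^ (p + q) := by
  rcases Nat.eq_zero_or_pos p with rfl | hp
  · simp
  rcases Nat.eq_zero_or_pos q with rfl | hq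
  · simp
  by_cases ha : f a = 0
  · rw [ha, zero_pow hq.ne', zero_mul]
    exact pow_nonneg (hf.nonneg _) _
  by_cases hc : f (a + p + q) = 0
  · rw [hc, zero_pow hp.ne', mul_zero]
    exact pow_nonneg (hf.nonneg _) _
  have hpos : ∀ b, a ≤ b → b ≤ a + p + q → 0 < f b := fun b h₁ h₂ =>
    hf.pos_of_mem_Icc ha hc ⟨h₁, h₂⟩
  have hconc : ∀ i : ℕ, i + 2 ≤ p + q → Real.log (f (a + i)) + Real.log (f (a + ↑(i + 2))) ≤
      2 * Real.log (f (a + ↑(i + 1))) := by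
    intro i hi
    have h₀ := hpos (a + i) (by omega) (by omega)
    have h₁ := hpos (a + i + 1) (by omega) (by omega)
    have h₂ := hpos (a + i + 2) (by omega) (by omega)
    have h := hf.mul_le_sq_succ (a + i)
    rw [← Real.log_le_log_iff (mul_pos h₀ h₂) (pow_pos h₁ 2), Real.log_mul h₀.ne' h₂.ne',
      Real.log_pow] at h
    push_cast
    rwa [← add_assoc, ← add_assoc]
  have hchord := chord_le_of_midpoint_concave hconc le_rfl
  have ha' := hpos a le_rfl (by omega)
  have hb' := hpos (a + p) (by omega) (by omega)
  have hc' := hpos (a + p + q) (by omega) le_rfl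
  rw [← Real.log_le_log_iff (by positivity) (by positivity), Real.log_mul (by positivity)
    (by positivity), Real.log_pow, Real.log_pow, Real.log_pow]
  push_cast at hchord ⊢
  simpa [add_assoc] using hchord

theorem min_le_of_mem_Icc {a b c : ℤ} (hb : b ∈ Set.Icc a c) : min (f a) (f c) ≤ f b := by
  obtain ⟨hab, hbc⟩ := hb
  obtain ⟨p, rfl⟩ : ∃ p : ℕ, b = a + p := ⟨(b - a).toNat, by omega⟩
  obtain ⟨q, rfl⟩ : ∃ q : ℕ, c = a + p + q := ⟨(c - a - p).toNat, by omega⟩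
  rcases Nat.eq_zero_or_pos (p + q) with hpq | hpq
  · simp [show p = 0 by omega]
  refine le_of_pow_le_pow_left₀ hpq.ne' (hf.nonneg _) ?_
  calc min (f a) (f (a + p + q)) ^ (p + q)
      = min (f a) (f (a + p + q)) ^ q * min (f a) (f (a + p + q)) ^ p := by ring
    _ ≤ f a ^ q * f (a + p + q) ^ p := by
      have hmin := le_min (hf.nonneg a) (hf.nonneg (a + p + q))
      exact mul_le_mul (pow_le_pow_left₀ hmin (min_le_left _ _) q)
        (pow_le_pow_left₀ hmin (min_le_right _ _) p) (by positivity) (pow_nonneg (hf.nonneg _) _)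
    _ ≤ f (a + p) ^ (p + q) := hf.pow_mul_pow_le_pow a p q

theorem comp_neg : IsLogConcaveSeq fun k => f (-k) where
  nonneg k := hf.nonneg (-k)
  log_concave k l hkl := by
    simpa [show (-k + -l) / 2 = -((k + l) / 2) by omega] using hf.log_concave (-k) (-l) (by omega)
  no_internal_zeros k l m hkl hlm hk hm :=
    hf.no_internal_zeros (-m) (-l) (-k) (by omega) (by omega) hm hk

variable (hmass : ∀ s : Finset ℤ, ∑ k ∈ s, f k ≤ 1)
include hmass

theorem apply_add_le_half {k₀ : ℤ} {δ : ℝ} {m : ℕ} (hm : 2 ≤ m * δ) (hk₀ : δ ≤ f k₀) :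
    f (k₀ + m) ≤ δ / 2 := by
  by_contra! hfar
  have hδ : 0 < δ := by nlinarith [(Nat.cast_nonneg m : (0 : ℝ) ≤ m)]
  have hmid : ∀ k ∈ Icc k₀ (k₀ + m), δ / 2 ≤ f k := fun k hk =>
    (le_min (by linarith) hfar.le).trans (hf.min_le_of_mem_Icc (Finset.mem_Icc.1 hk))
  have hcount := (card_nsmul_le_sum _ _ _ hmid).trans (hmass _)
  rw [Int.card_Icc, nsmul_eq_mul, show k₀ + m + 1 - k₀ = ((m + 1 : ℕ) : ℤ) by push_cast; ring,
    Int.toNat_natCast] at hcount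
  push_cast at hcount
  nlinarith

theorem apply_add_le_two_mul_pow {k₀ : ℤ} {δ w : ℝ} {m : ℕ} (hm : 2 ≤ m * δ) (hk₀ : δ ≤ f k₀)
    (hw₀ : 0 ≤ w) (hw₁ : w ≤ 1) (hwm : 1 / 2 ≤ w ^ m) (j : ℕ) :
    f (k₀ + j) ≤ 2 * w ^ j := by
  have hδ : 0 < δ := by nlinarith [(Nat.cast_nonneg m : (0 : ℝ) ≤ m)]
  have hm₀ : m ≠ 0 := by rintro rfl; norm_num at hm
  rcases lt_or_ge j m with hj | hj
  · calc f (k₀ + j) ≤ 1 := by simpa using hmass {k₀ + j}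
      _ ≤ 2 * w ^ m := by linarith
      _ ≤ 2 * w ^ j := by linarith [pow_le_pow_of_le_one hw₀ hw₁ hj.le]
  obtain ⟨r, rfl⟩ := Nat.exists_eq_add_of_le hj
  suffices f (k₀ + m + r) ≤ w ^ (m + r) by
    push_cast; rw [← add_assoc]; linarith [pow_nonneg hw₀ (m + r)]
  refine le_of_pow_le_pow_left₀ hm₀ (by positivity) ?_
  have hkey := hf.pow_mul_pow_le_pow k₀ m r
  have hfar := hf.apply_add_le_half hmass hm hk₀
  have hδ₁ : δ ≤ 1 := hk₀.trans (by simpa using hmass {k₀})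
  have : δ ^ r * f (k₀ + m + r) ^ m ≤ δ ^ r * (1 / 2) ^ (m + r) :=
    calc δ ^ r * f (k₀ + m + r) ^ m ≤ f k₀ ^ r * f (k₀ + m + r) ^ m := by
          gcongr; exact pow_nonneg (hf.nonneg _) _
      _ ≤ (δ / 2) ^ (m + r) := hkey.trans (by gcongr; exact hf.nonneg _)
      _ = δ ^ r * (δ ^ m * (1 / 2) ^ (m + r)) := by ring
      _ ≤ δ ^ r * (1 / 2) ^ (m + r) := by
          gcongr; exact mul_le_of_le_one_left (by positivity) (pow_le_one₀ hδ.le hδ₁)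
  calc f (k₀ + m + r) ^ m ≤ (1 / 2) ^ (m + r) := le_of_mul_le_mul_left this (by positivity)
    _ ≤ (w ^ m) ^ (m + r) := by gcongr
    _ = (w ^ (m + r)) ^ m := by ring

theorem le_two_mul_pow_natAbs {k₀ : ℤ} {δ w : ℝ} {m : ℕ} (hm : 2 ≤ m * δ) (hk₀ : δ ≤ f k₀)
    (hw₀ : 0 ≤ w) (hw₁ : w ≤ 1) (hwm : 1 / 2 ≤ w ^ m) (k : ℤ) :
    f k ≤ 2 * w ^ (k - k₀).natAbs := by
  rcases le_total k₀ k with hk | hk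
  · have := hf.apply_add_le_two_mul_pow hmass hm hk₀ hw₀ hw₁ hwm (k - k₀).toNat
    rwa [show k₀ + ((k - k₀).toNat : ℤ) = k by omega,
      show (k - k₀).toNat = (k - k₀).natAbs by omega] at this
  · have hmass' (s : Finset ℤ) : ∑ k ∈ s, f (-k) ≤ 1 := by
      simpa [sum_image fun x _ y _ h => neg_injective h] using hmass (s.image (- ·))
    have := hf.comp_neg.apply_add_le_two_mul_pow hmass' (k₀ := -k₀) hm (by simpa using hk₀)
      hw₀ hw₁ hwm (k₀ - k).toNat
    rwa [show -(-k₀ + ((k₀ - k).toNat : ℤ)) = k by omega,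
      show (k₀ - k).toNat = (k - k₀).natAbs by omega] at this

end

theorem exists_geometric_tail {δ : ℝ} (hδ : 0 < δ) :
    ∃ w, 0 ≤ w ∧ w < 1 ∧ ∀ f : ℤ → ℝ, IsLogConcaveSeq f → (∀ s : Finset ℤ, ∑ k ∈ s, f k ≤ 1) →
      ∀ k₀, δ ≤ f k₀ → ∀ k, f k ≤ 2 * w ^ (k - k₀).natAbs := by
  set m := ⌈2 / δ⌉₊
  have hm : 2 ≤ m * δ := (div_le_iff₀ hδ).1 (Nat.le_ceil _)
  have hm₀ : m ≠ 0 := by rintro h; rw [h] at hm; norm_num at hm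
  have hw₁ : (1 / 2 : ℝ) ^ (m⁻¹ : ℝ) < 1 :=
    Real.rpow_lt_one (by norm_num) (by norm_num) (by positivity)
  refine ⟨(1 / 2) ^ (m⁻¹ : ℝ), by positivity, hw₁, fun f hf hmass k₀ hk₀ k =>
    hf.le_two_mul_pow_natAbs hmass hm hk₀ (by positivity) hw₁.le ?_ k⟩
  rw [Real.rpow_inv_natCast_pow (by norm_num) hm₀]

theorem summable_sq_mul {f : ℤ → ℝ} (hf : IsLogConcaveSeq f)
    (hmass : ∀ s : Finset ℤ, ∑ k ∈ s, f k ≤ 1) {k₀ : ℤ} (hk₀ : f k₀ ≠ 0) :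
    Summable fun k : ℤ => (k : ℝ) ^ 2 * f k := by
  obtain ⟨w, hw₀, hw₁, htail⟩ := exists_geometric_tail ((hf.nonneg k₀).lt_of_ne' hk₀)
  refine ((summable_sq_add_one_mul_pow_natAbs_sub hw₀ hw₁ k₀).mul_left 2).of_nonneg_of_le
    (fun k => mul_nonneg (sq_nonneg _) (hf.nonneg k)) fun k => ?_
  have := htail f hf hmass k₀ le_rfl k
  nlinarith [hf.nonneg k, sq_nonneg (k : ℝ), pow_nonneg hw₀ (k - k₀).natAbs]

end IsLogConcaveSeq

/-- Let `M⁽ⁿ⁾` be probability measures on `ℤ`, each log-concave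
(`M(k)M(l) ≤ M((k+l)/2)²` for `k ≡ l mod 2`) and with no internal zeros (the support
is an interval). If `M⁽ⁿ⁾ → M⁽∞⁾` pointwise on `ℤ` with `M⁽∞⁾` nonzero, then `M⁽∞⁾`
is a probability measure and the second moments of `M⁽ⁿ⁾` converge to the second
moment of `M⁽∞⁾`. -/
theorem stmt_19 (M : ℕ → ℤ → ℝ) (Minf : ℤ → ℝ)
    (hpos : ∀ n k, 0 ≤ M n k)
    (hprob : ∀ n, Summable (fun k : ℤ => M n k) ∧ ∑' k : ℤ, M n k = 1)
    (hlog : ∀ n, ∀ k l : ℤ, k % 2 = l % 2 → M n k * M n l ≤ M n ((k + l) / 2) ^ 2)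
    (hniz : ∀ n, ∀ k l m : ℤ, k ≤ l → l ≤ m → M n k ≠ 0 → M n m ≠ 0 → M n l ≠ 0)
    (hconv : ∀ k : ℤ, Tendsto (fun n => M n k) atTop (nhds (Minf k)))
    (hne : ∃ k : ℤ, Minf k ≠ 0) :
    (Summable (fun k : ℤ => Minf k) ∧ ∑' k : ℤ, Minf k = 1) ∧
      (∀ n, Summable (fun k : ℤ => (k : ℝ) ^ 2 * M n k)) ∧
      Summable (fun k : ℤ => (k : ℝ) ^ 2 * Minf k) ∧
      Tendsto (fun n => ∑' k : ℤ, (k : ℝ) ^ 2 * M n k) atTop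
        (nhds (∑' k : ℤ, (k : ℝ) ^ 2 * Minf k)) := by
  have hlc n : IsLogConcaveSeq (M n) := ⟨hpos n, hlog n, hniz n⟩
  have hmass n (s : Finset ℤ) : ∑ k ∈ s, M n k ≤ 1 :=
    (hprob n).2 ▸ (hprob n).1.sum_le_tsum s fun k _ => hpos n k
  obtain ⟨k₀, hk₀⟩ := hne
  have hMinf : 0 < Minf k₀ := (ge_of_tendsto' (hconv k₀) (hpos · k₀)).lt_of_ne' hk₀
  obtain ⟨w, hw₀, hw₁, htail⟩ := IsLogConcaveSeq.exists_geometric_tail (half_pos hMinf)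
  have hbound : ∀ᶠ n in atTop, ∀ k, ‖M n k‖ ≤ 2 * (((k : ℝ) ^ 2 + 1) * w ^ (k - k₀).natAbs) ∧
      ‖(k : ℝ) ^ 2 * M n k‖ ≤ 2 * (((k : ℝ) ^ 2 + 1) * w ^ (k - k₀).natAbs) := by
    filter_upwards [(hconv k₀).eventually (eventually_ge_nhds (half_lt_self hMinf))] with n hn k
    have := htail _ (hlc n) (hmass n) k₀ hn k
    rw [Real.norm_of_nonneg (hpos n k), Real.norm_of_nonneg (mul_nonneg (sq_nonneg _) (hpos n k))]
    constructor <;> nlinarith [hpos n k, sq_nonneg (k : ℝ), pow_nonneg hw₀ (k - k₀).natAbs]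
  have hb := (summable_sq_add_one_mul_pow_natAbs_sub hw₀ hw₁ k₀).mul_left 2
  obtain ⟨hsum, hlim⟩ := summable_and_tendsto_tsum_of_dominated hb hconv
    (hbound.mono fun _ h k => (h k).1)
  obtain ⟨hsum₂, hlim₂⟩ := summable_and_tendsto_tsum_of_dominated hb
    (fun k => (hconv k).const_mul ((k : ℝ) ^ 2)) (hbound.mono fun _ h k => (h k).2)
  refine ⟨⟨hsum, tendsto_nhds_unique hlim ?_⟩, fun n => ?_, hsum₂, hlim₂⟩
  · exact tendsto_const_nhds.congr fun n => ((hprob n).2).symm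
  · obtain ⟨k, hk⟩ : ∃ k, M n k ≠ 0 := by
      by_contra! h
      simpa [h] using (hprob n).2
    exact (hlc n).summable_sq_mul (hmass n) hk
end
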